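/- arXiv:2407.03807 — 6 statements merged into one kernel-verified Lean document; each statement's English description precedes it below -/
import Mathlib

section
/- For every signature u ∈ (ZMod 2)^m and every integer i, the Walecki tournaments W_u and W_{uR_i} are isomorphic as tournaments, i.e., there exists a bijection φ of the vertex set (ZMod (2m)) ∪ {*} to itself such that (x, y) is an arc of W_u if and only if (φ(x), φ(y)) is an arc of W_{uR_i}. -/
/-- Vertex set of the Walecki tournament on `2*m+1` vertices:
`ZMod (2*m)` together with the extra vertex `*`, encoded as `none`. -/
abbrev WVert (m : ℕ) := Option (ZMod (2 * m))

/-- The arc relation of the directed Hamilton cycle `C_j⁺`: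
it has arcs `(*, j)` and `(j+m, *)`, together with the arcs `(j−k, j+k+1)` for
`0 ≤ k ≤ m−1` and `(j+k, j−k)` for `1 ≤ k ≤ m−1` (arithmetic in `ZMod (2*m)`). -/
def Cplus (m : ℕ) (j : ZMod (2 * m)) (x y : WVert m) : Prop :=
  (x = none ∧ y = some j) ∨
  (x = some (j + (m : ZMod (2 * m))) ∧ y = none) ∨
  (∃ k : ℕ, k ≤ m - 1 ∧ x = some (j - (k : ZMod (2 * m))) ∧
    y = some (j + (k : ZMod (2 * m)) + 1)) ∨
  (∃ k : ℕ, 1 ≤ k ∧ k ≤ m - 1 ∧ x = some (j + (k : ZMod (2 * m))) ∧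
    y = some (j - (k : ZMod (2 * m))))

/-- The arc relation of the Walecki tournament `W_u` with signature `u ∈ (ZMod 2)^m`:
the arcs of `C_j⁺` when `u_j = 1`, and the arcs of `C_j⁻` (the reverse of `C_j⁺`)
when `u_j = 0`, for `0 ≤ j ≤ m−1`. -/
def warc (m : ℕ) (u : Fin m → ZMod 2) (x y : WVert m) : Prop :=
  ∃ j : Fin m, (u j = 1 ∧ Cplus m ((j : ℕ) : ZMod (2 * m)) x y) ∨
               (u j = 0 ∧ Cplus m ((j : ℕ) : ZMod (2 * m)) y x)

/-- `d(a)` for the arc `a = (x,y)`: the number of vertices `z ≠ x, y` such that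
`(y,z)` and `(z,x)` are both arcs, i.e. `x, y, z` span a directed triangle. -/
noncomputable def dcount {α : Type*} (arc : α → α → Prop) (x y : α) : ℕ :=
  {z : α | z ≠ x ∧ z ≠ y ∧ arc y z ∧ arc z x}.ncard

/-- `i(a)` for the arc `a = (x,y)`: the number of vertices `z ≠ x, y` with arcs
`(z,x)` and `(z,y)`. -/
noncomputable def icount {α : Type*} (arc : α → α → Prop) (x y : α) : ℕ :=
  {z : α | z ≠ x ∧ z ≠ y ∧ arc z x ∧ arc z y}.ncard

/-- `o(a)` for the arc `a = (x,y)`: the number of vertices `z ≠ x, y` with arcs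
`(x,z)` and `(y,z)`. -/
noncomputable def ocount {α : Type*} (arc : α → α → Prop) (x y : α) : ℕ :=
  {z : α | z ≠ x ∧ z ≠ y ∧ arc x z ∧ arc y z}.ncard

/-- `b(a)` for the arc `a = (x,y)`: the number of vertices `z ≠ x, y` with arcs
`(x,z)` and `(z,y)`. -/
noncomputable def bcount {α : Type*} (arc : α → α → Prop) (x y : α) : ℕ :=
  {z : α | z ≠ x ∧ z ≠ y ∧ arc x z ∧ arc z y}.ncard

/-- Two elements of `ZMod (2*m)` have the same parity if their difference is
twice an element of `ZMod (2*m)`. -/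
def sameParity (m : ℕ) (x y : ZMod (2 * m)) : Prop :=
  ∃ c : ZMod (2 * m), x - y = 2 * c

/-- Three distinct vertices `x, y, z` induce a directed triangle:
the three arcs among them form a directed 3-cycle. -/
def dirTri {α : Type*} (arc : α → α → Prop) (x y z : α) : Prop :=
  x ≠ y ∧ y ≠ z ∧ x ≠ z ∧
    ((arc x y ∧ arc y z ∧ arc z x) ∨ (arc x z ∧ arc z y ∧ arc y x))

/-- The all-ones signature `1_m`. -/
def onesSig (m : ℕ) : Fin m → ZMod 2 := fun _ => 1

/-- The complementing register shift `R_1`: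
`uR_1 = (1 − u_{m−1}, u_0, u_1, …, u_{m−2})`. -/
def shift1 (m : ℕ) (u : Fin m → ZMod 2) : Fin m → ZMod 2 := fun i =>
  if (i : ℕ) = 0 then 1 - u ⟨m - 1, Nat.sub_lt i.pos Nat.one_pos⟩
  else u ⟨(i : ℕ) - 1, lt_of_le_of_lt (Nat.sub_le _ _) i.isLt⟩

/-- The inverse of the complementing register shift `R_1`:
`(uR_1⁻¹)_i = u_{i+1}` for `i < m−1` and `(uR_1⁻¹)_{m−1} = 1 − u_0`. -/
def unshift1 (m : ℕ) (u : Fin m → ZMod 2) : Fin m → ZMod 2 := fun i =>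
  if h : (i : ℕ) = m - 1 then 1 - u ⟨0, i.pos⟩
  else u ⟨(i : ℕ) + 1, by have h1 := i.isLt; omega⟩

/-- `R_t` for an integer `t`: the `t`-th iterate of the complementing register
shift `R_1` (inverse iterates when `t` is negative). `Rshift m t u = u R_t`. -/
def Rshift (m : ℕ) (t : ℤ) (u : Fin m → ZMod 2) : Fin m → ZMod 2 :=
  if 0 ≤ t then (shift1 m)^[t.toNat] u else (unshift1 m)^[(-t).toNat] u

/-- The permutation `σ = (0 1 2 ⋯ m−1)(n−1 n−2 ⋯ m)` of the vertex set:
it fixes `*`, maps `k ↦ k+1` for `0 ≤ k ≤ m−2`, `m−1 ↦ 0`,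
`k ↦ k−1` for `m+1 ≤ k ≤ n−1`, and `m ↦ n−1`. -/
def sigmaFun (m : ℕ) : WVert m → WVert m
  | none => none
  | some x =>
      if x.val < m then some ((((x.val + 1) % m : ℕ)) : ZMod (2 * m))
      else some (((m + (x.val - m + (m - 1)) % m : ℕ)) : ZMod (2 * m))

/-- The inverse of the permutation `σ`. -/
def sigmaInvFun (m : ℕ) : WVert m → WVert m
  | none => none
  | some x =>
      if x.val < m then some ((((x.val + (m - 1)) % m : ℕ)) : ZMod (2 * m))
      else some (((m + (x.val - m + 1) % m : ℕ)) : ZMod (2 * m))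

/-- `σ^t` for an integer `t`: the `t`-th iterate of `σ`
(inverse iterates when `t` is negative). -/
def sigmaZ (m : ℕ) (t : ℤ) : WVert m → WVert m :=
  if 0 ≤ t then (sigmaFun m)^[t.toNat] else (sigmaInvFun m)^[(-t).toNat]

def rho (m : ℕ) : WVert m → WVert m := Option.map (· + 1)
def rhoInv (m : ℕ) : WVert m → WVert m := Option.map (· - 1)

lemma Cplus_shift (m : ℕ) (c j : ZMod (2*m)) (x y : WVert m) (h : Cplus m j x y) :
    Cplus m (j + c) (Option.map (· + c) x) (Option.map (· + c) y) := by
  obtain ⟨hx, hy⟩ | ⟨hx, hy⟩ | ⟨k, hk, hx, hy⟩ | ⟨k, hk1, hk, hx, hy⟩ := h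
  · subst hx hy; exact Or.inl ⟨rfl, rfl⟩
  · subst hx hy
    exact Or.inr (Or.inl ⟨by simp only [Option.map_some]; exact congrArg some (by ring), rfl⟩)
  · subst hx hy
    refine Or.inr (Or.inr (Or.inl ⟨k, hk, ?_, ?_⟩)) <;>
      · simp only [Option.map_some]; exact congrArg some (by ring)
  · subst hx hy
    refine Or.inr (Or.inr (Or.inr ⟨k, hk1, hk, ?_, ?_⟩)) <;>
      · simp only [Option.map_some]; exact congrArg some (by ring)

lemma two_m_zero (m : ℕ) : (m : ZMod (2*m)) + m = 0 := by
  have h : ((2*m : ℕ) : ZMod (2*m)) = 0 := ZMod.natCast_self _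
  push_cast at h; linear_combination h

lemma Cplus_flip (m : ℕ) (hm : 1 ≤ m) (j : ZMod (2*m)) (x y : WVert m)
    (h : Cplus m (j + m) x y) : Cplus m j y x := by
  have h2 := two_m_zero m
  obtain ⟨hx, hy⟩ | ⟨hx, hy⟩ | ⟨k, hk, hx, hy⟩ | ⟨k, hk1, hk, hx, hy⟩ := h
  · exact Or.inr (Or.inl ⟨hy, hx⟩)
  · refine Or.inl ⟨hy, ?_⟩
    rw [hx]; exact congrArg some (by linear_combination h2)
  · have hkm : k ≤ m - 1 := hk
    have hc : ((m - 1 - k : ℕ) : ZMod (2*m)) = (m : ZMod (2*m)) - 1 - k := by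
      rw [Nat.cast_sub (by omega : k ≤ m - 1), Nat.cast_sub hm]; push_cast; ring
    refine Or.inr (Or.inr (Or.inl ⟨m - 1 - k, by omega, ?_, ?_⟩))
    · rw [hy, hc]; exact congrArg some (by linear_combination h2)
    · rw [hx, hc]; exact congrArg some (by ring)
  · have hc : ((m - k : ℕ) : ZMod (2*m)) = (m : ZMod (2*m)) - k := by
      rw [Nat.cast_sub (by omega : k ≤ m)]
    refine Or.inr (Or.inr (Or.inr ⟨m - k, by omega, by omega, ?_, ?_⟩))
    · rw [hy, hc]; exact congrArg some (by ring)
    · rw [hx, hc]; exact congrArg some (by linear_combination h2)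

lemma rho_eq (m : ℕ) (x : WVert m) : rho m x = Option.map (· + 1) x := rfl
lemma rhoInv_eq (m : ℕ) (x : WVert m) : rhoInv m x = Option.map (· + (-1)) x := by
  cases x <;> simp [rhoInv, sub_eq_add_neg]

lemma warc_shift (m : ℕ) (hm : 1 ≤ m) (u : Fin m → ZMod 2) (x y : WVert m)
    (h : warc m u x y) : warc m (shift1 m u) (rho m x) (rho m y) := by
  obtain ⟨j, hj⟩ := h
  by_cases hlt : (j : ℕ) + 1 < m
  · refine ⟨⟨(j:ℕ)+1, hlt⟩, ?_⟩
    have hs : shift1 m u ⟨(j:ℕ)+1, hlt⟩ = u j := by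
      have hne : ((⟨(j:ℕ)+1, hlt⟩ : Fin m) : ℕ) ≠ 0 := by simp
      unfold shift1; rw [if_neg hne]
      exact congrArg u (Fin.ext (by simp))
    have hc : (((j:ℕ)+1 : ℕ) : ZMod (2*m)) = ((j:ℕ) : ZMod (2*m)) + 1 := by push_cast; ring
    rcases hj with ⟨h1, h2⟩ | ⟨h1, h2⟩
    · refine Or.inl ⟨hs.trans h1, ?_⟩
      show Cplus m (((j:ℕ)+1 : ℕ) : ZMod (2*m)) _ _
      rw [hc]; exact Cplus_shift m 1 _ x y h2
    · refine Or.inr ⟨hs.trans h1, ?_⟩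
      show Cplus m (((j:ℕ)+1 : ℕ) : ZMod (2*m)) _ _
      rw [hc]; exact Cplus_shift m 1 _ y x h2
  · have hjm : (j:ℕ) = m - 1 := by have := j.isLt; omega
    refine ⟨⟨0, hm⟩, ?_⟩
    have hs : shift1 m u ⟨0, hm⟩ = 1 - u j := by
      unfold shift1; rw [if_pos rfl]
      exact congrArg (fun a => 1 - u a) (Fin.ext (by simp [hjm]))
    have key : ∀ a b : WVert m, Cplus m (((j:ℕ)) : ZMod (2*m)) a b →
        Cplus m (((0:ℕ)) : ZMod (2*m)) (rho m b) (rho m a) := by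
      intro a b hab
      have h1 := Cplus_shift m 1 _ a b hab
      have he : ((j:ℕ) : ZMod (2*m)) + 1 = (((0:ℕ)) : ZMod (2*m)) + (m : ZMod (2*m)) := by
        rw [hjm, Nat.cast_sub hm]; push_cast; ring
      rw [he] at h1
      exact Cplus_flip m hm _ _ _ h1
    rcases hj with ⟨h1, h2⟩ | ⟨h1, h2⟩
    · refine Or.inr ⟨?_, key x y h2⟩
      rw [hs, h1]; decide
    · refine Or.inl ⟨?_, key y x h2⟩
      rw [hs, h1]; decide

lemma warc_unshift (m : ℕ) (hm : 1 ≤ m) (u : Fin m → ZMod 2) (x y : WVert m)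
    (h : warc m u x y) : warc m (unshift1 m u) (rhoInv m x) (rhoInv m y) := by
  obtain ⟨j, hj⟩ := h
  by_cases hpos : 1 ≤ (j : ℕ)
  · have hj1 : (j:ℕ) - 1 < m := by have := j.isLt; omega
    refine ⟨⟨(j:ℕ)-1, hj1⟩, ?_⟩
    have hs : unshift1 m u ⟨(j:ℕ)-1, hj1⟩ = u j := by
      have hne : ((⟨(j:ℕ)-1, hj1⟩ : Fin m) : ℕ) ≠ m - 1 := by
        simp only [Fin.val_mk]; have := j.isLt; omega
      unfold unshift1; rw [dif_neg hne]
      exact congrArg u (Fin.ext (by simp only [Fin.val_mk]; omega))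
    have hc : (((j:ℕ)-1 : ℕ) : ZMod (2*m)) = ((j:ℕ) : ZMod (2*m)) + (-1) := by
      rw [Nat.cast_sub hpos]; push_cast; ring
    rcases hj with ⟨h1, h2⟩ | ⟨h1, h2⟩
    · refine Or.inl ⟨hs.trans h1, ?_⟩
      show Cplus m (((j:ℕ)-1 : ℕ) : ZMod (2*m)) _ _
      rw [hc, rhoInv_eq, rhoInv_eq]; exact Cplus_shift m (-1) _ x y h2
    · refine Or.inr ⟨hs.trans h1, ?_⟩
      show Cplus m (((j:ℕ)-1 : ℕ) : ZMod (2*m)) _ _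
      rw [hc, rhoInv_eq, rhoInv_eq]; exact Cplus_shift m (-1) _ y x h2
  · have hjm : (j:ℕ) = 0 := by omega
    have hm1 : m - 1 < m := by omega
    refine ⟨⟨m-1, hm1⟩, ?_⟩
    have hs : unshift1 m u ⟨m-1, hm1⟩ = 1 - u j := by
      unfold unshift1; rw [dif_pos rfl]
      exact congrArg (fun a => 1 - u a) (Fin.ext (by simp [hjm]))
    have key : ∀ a b : WVert m, Cplus m (((j:ℕ)) : ZMod (2*m)) a b →
        Cplus m (((m-1:ℕ)) : ZMod (2*m)) (rhoInv m b) (rhoInv m a) := by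
      intro a b hab
      have h1 := Cplus_shift m (-1) _ a b hab
      have he : ((j:ℕ) : ZMod (2*m)) + (-1) = (((m-1:ℕ)) : ZMod (2*m)) + (m : ZMod (2*m)) := by
        rw [hjm, Nat.cast_sub hm]; push_cast
        linear_combination - two_m_zero m
      rw [he] at h1
      rw [rhoInv_eq, rhoInv_eq]
      exact Cplus_flip m hm _ _ _ h1
    rcases hj with ⟨h1, h2⟩ | ⟨h1, h2⟩
    · refine Or.inr ⟨?_, key x y h2⟩
      rw [hs, h1]; decide
    · refine Or.inl ⟨?_, key y x h2⟩
      rw [hs, h1]; decide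

lemma rho_rhoInv (m : ℕ) (x : WVert m) : rho m (rhoInv m x) = x := by
  cases x <;> simp [rho, rhoInv]
lemma rhoInv_rho (m : ℕ) (x : WVert m) : rhoInv m (rho m x) = x := by
  cases x <;> simp [rho, rhoInv]

lemma zmod2_sub_sub (a : ZMod 2) : 1 - (1 - a) = a := by ring

lemma unshift_shift (m : ℕ) (hm : 1 ≤ m) (u : Fin m → ZMod 2) :
    unshift1 m (shift1 m u) = u := by
  funext i
  by_cases h : (i : ℕ) = m - 1
  · rw [unshift1, dif_pos h, shift1]
    rw [if_pos rfl, zmod2_sub_sub]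
    exact congrArg u (Fin.ext (by simp [h]))
  · rw [unshift1, dif_neg h, shift1]
    have hlt := i.isLt
    rw [if_neg (by simp only [Fin.val_mk]; omega)]
    exact congrArg u (Fin.ext (by simp))
  
lemma shift_unshift (m : ℕ) (hm : 1 ≤ m) (u : Fin m → ZMod 2) :
    shift1 m (unshift1 m u) = u := by
  funext i
  by_cases h : (i : ℕ) = 0
  · rw [shift1, if_pos h, unshift1, dif_pos (by simp), zmod2_sub_sub]
    exact congrArg u (Fin.ext (by simp [h]))
  · rw [shift1, if_neg h, unshift1]
    have hlt := i.isLt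
    rw [dif_neg (by simp only [Fin.val_mk]; omega)]
    exact congrArg u (Fin.ext (by simp only [Fin.val_mk]; omega))

lemma warc_shift_iff (m : ℕ) (hm : 1 ≤ m) (u : Fin m → ZMod 2) (x y : WVert m) :
    warc m u x y ↔ warc m (shift1 m u) (rho m x) (rho m y) := by
  refine ⟨warc_shift m hm u x y, fun h => ?_⟩
  have h2 := warc_unshift m hm _ _ _ h
  rwa [unshift_shift m hm, rhoInv_rho, rhoInv_rho] at h2

lemma warc_unshift_iff (m : ℕ) (hm : 1 ≤ m) (u : Fin m → ZMod 2) (x y : WVert m) :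
    warc m u x y ↔ warc m (unshift1 m u) (rhoInv m x) (rhoInv m y) := by
  refine ⟨warc_unshift m hm u x y, fun h => ?_⟩
  have h2 := warc_shift m hm _ _ _ h
  rwa [shift_unshift m hm, rho_rhoInv, rho_rhoInv] at h2


/-- For every signature `u ∈ (ZMod 2)^m` and every integer `t`, the
Walecki tournaments `W_u` and `W_{uR_t}` are isomorphic: there is a bijection `φ`
of the vertex set with `(x,y)` an arc of `W_u` iff `(φ x, φ y)` is an arc of `W_{uR_t}`. -/
theorem walecki_stmt0 (m : ℕ) (hm : 1 ≤ m) (u : Fin m → ZMod 2) (t : ℤ) :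
    ∃ φ : WVert m → WVert m, Function.Bijective φ ∧
      ∀ x y : WVert m, warc m u x y ↔ warc m (Rshift m t u) (φ x) (φ y) := by
  have hrho : Function.Bijective (rho m) :=
    Function.bijective_iff_has_inverse.2 ⟨rhoInv m, rhoInv_rho m, rho_rhoInv m⟩
  have hrhoInv : Function.Bijective (rhoInv m) :=
    Function.bijective_iff_has_inverse.2 ⟨rho m, rho_rhoInv m, rhoInv_rho m⟩
  have main : ∀ n : ℕ, ∀ v : Fin m → ZMod 2, ∀ x y : WVert m,
      (warc m v x y ↔ warc m ((shift1 m)^[n] v) ((rho m)^[n] x) ((rho m)^[n] y)) ∧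
      (warc m v x y ↔ warc m ((unshift1 m)^[n] v) ((rhoInv m)^[n] x) ((rhoInv m)^[n] y)) := by
    intro n
    induction n with
    | zero => intro v x y; exact ⟨Iff.rfl, Iff.rfl⟩
    | succ n ih =>
      intro v x y
      constructor
      · rw [Function.iterate_succ_apply', Function.iterate_succ_apply',
          Function.iterate_succ_apply']
        exact (ih v x y).1.trans (warc_shift_iff m hm _ _ _)
      · rw [Function.iterate_succ_apply', Function.iterate_succ_apply',
          Function.iterate_succ_apply']
        exact (ih v x y).2.trans (warc_unshift_iff m hm _ _ _)
  unfold Rshift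
  by_cases ht : 0 ≤ t
  · rw [if_pos ht]
    exact ⟨(rho m)^[t.toNat], hrho.iterate _, fun x y => (main t.toNat u x y).1⟩
  · rw [if_neg ht]
    exact ⟨(rhoInv m)^[(-t).toNat], hrhoInv.iterate _, fun x y => (main (-t).toNat u x y).2⟩
end

section
/- Let W_u be a Walecki tournament, let i ∈ ZMod n, and let j ∈ ZMod n be any vertex with j ≠ i such that j has the same parity as i. Then exactly one of the two arcs of W_u between i and j and between i and j+1 is oriented toward i (and the other is oriented away from i); equivalently, (j, i) is an arc of W_u if and only if (i, j+1) is an arc of W_u. -/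
/-- Let `i, j ∈ ZMod n` with `j ≠ i` of the same parity as `i`. Then
of the arcs between `i` and the vertices `j` and `j+1`, exactly one is oriented
toward `i`: `(j, i)` is an arc of `W_u` iff `(i, j+1)` is an arc of `W_u`. -/
theorem walecki_stmt6 (m : ℕ) (hm : 1 ≤ m) (u : Fin m → ZMod 2)
    (i j : ZMod (2 * m)) (hij : j ≠ i) (hpar : sameParity m i j) :
    warc m u (some j) (some i) ↔ warc m u (some i) (some (j + 1)) := by
  obtain ⟨c, hc⟩ := hpar
  have hsum : i + j = 2 * (c + j) := by linear_combination hc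
  have h1ne : ∀ d : ZMod (2 * m), (1 : ZMod (2 * m)) ≠ 2 * d := by
    intro d h
    have h2 : ∀ y : ZMod 2, (1 : ZMod 2) ≠ 2 * y := by decide
    have := congrArg (ZMod.castHom (dvd_mul_right 2 m) (ZMod 2)) h
    rw [map_one, map_mul, map_ofNat] at this
    exact h2 _ this
  have hcastm : ((m - 1 : ℕ) : ZMod (2 * m)) = (m : ZMod (2 * m)) - 1 := by
    push_cast [Nat.cast_sub hm]; ring
  have h2m : ((m : ZMod (2 * m)) + m) = 0 := by
    have := ZMod.natCast_self (2 * m)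
    push_cast at this
    linear_combination this
  constructor
  · rintro ⟨j', h⟩
    refine ⟨j', ?_⟩
    set L : ZMod (2 * m) := ((j' : ℕ) : ZMod (2 * m)) with hLdef
    rcases h with ⟨hu, hC⟩ | ⟨hu, hC⟩
    · left
      refine ⟨hu, ?_⟩
      rcases hC with ⟨hx, _⟩ | ⟨_, hy⟩ | ⟨k, hk, hx, hy⟩ | ⟨k, hk1, hk, hx, hy⟩
      · simp at hx
      · simp at hy
      · -- odd sum, contradiction
        simp only [Option.some.injEq] at hx hy
        exact absurd (by linear_combination hsum - hx - hy) (h1ne (c + j - L))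
      · simp only [Option.some.injEq] at hx hy
        refine Or.inr (Or.inr (Or.inl ⟨k, hk, ?_, ?_⟩))
        · rw [hy]
        · rw [hx]
    · right
      refine ⟨hu, ?_⟩
      rcases hC with ⟨hx, _⟩ | ⟨_, hy⟩ | ⟨k, hk, hx, hy⟩ | ⟨k, hk1, hk, hx, hy⟩
      · simp at hx
      · simp at hy
      · simp only [Option.some.injEq] at hx hy
        exact absurd (by linear_combination hsum - hx - hy) (h1ne (c + j - L))
      · simp only [Option.some.injEq] at hx hy
        have hck : ((k - 1 : ℕ) : ZMod (2 * m)) = (k : ZMod (2 * m)) - 1 := by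
          push_cast [Nat.cast_sub hk1]; ring
        refine Or.inr (Or.inr (Or.inl ⟨k - 1, by omega, ?_, ?_⟩))
        · rw [hck, hy]; congr 1; ring
        · rw [hck, hx]; congr 1; ring
  · rintro ⟨j', h⟩
    refine ⟨j', ?_⟩
    set L : ZMod (2 * m) := ((j' : ℕ) : ZMod (2 * m)) with hLdef
    rcases h with ⟨hu, hC⟩ | ⟨hu, hC⟩
    · left
      refine ⟨hu, ?_⟩
      rcases hC with ⟨hx, _⟩ | ⟨_, hy⟩ | ⟨k, hk, hx, hy⟩ | ⟨k, hk1, hk, hx, hy⟩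
      · simp at hx
      · simp at hy
      · simp only [Option.some.injEq] at hx hy
        have hj : j = L + k := by linear_combination hy
        have hk1 : 1 ≤ k := by
          rcases Nat.eq_zero_or_pos k with h0 | h0
          · subst h0
            exfalso
            apply hij
            rw [hj, hx]
            push_cast
            ring
          · exact h0
        refine Or.inr (Or.inr (Or.inr ⟨k, hk1, hk, ?_, ?_⟩))
        · rw [hj]
        · rw [hx]
      · simp only [Option.some.injEq] at hx hy
        exact absurd (by linear_combination hx + hy - hsum) (h1ne (L - c - j))
    · right
      refine ⟨hu, ?_⟩
      rcases hC with ⟨hx, _⟩ | ⟨_, hy⟩ | ⟨k, hk, hx, hy⟩ | ⟨k, hk1, hk, hx, hy⟩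
      · simp at hx
      · simp at hy
      · simp only [Option.some.injEq] at hx hy
        have hj : j = L - k - 1 := by linear_combination hx
        rcases (by omega : k + 1 ≤ m - 1 ∨ k = m - 1) with hk2 | hk2
        · have hck : ((k + 1 : ℕ) : ZMod (2 * m)) = (k : ZMod (2 * m)) + 1 := by
            push_cast; ring
          refine Or.inr (Or.inr (Or.inr ⟨k + 1, Nat.le_add_left 1 k, hk2, ?_, ?_⟩))
          · rw [hck, hy]; congr 1; ring
          · rw [hck, hj]; congr 1; ring
        · exfalso
          apply hij
          subst hk2
          rw [hj, hy, hcastm]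
          linear_combination -h2m
      · simp only [Option.some.injEq] at hx hy
        exact absurd (by linear_combination hx + hy - hsum) (h1ne (L - c - j))
end

section
/- Let W_u be a Walecki tournament and let a be the arc of W_u between vertices i, j ∈ ZMod n, where i and j have opposite parity and are not consecutive (j ∉ {i−1, i+1}). Suppose there is some ℓ ∈ ZMod n with ℓ ∉ {i, j} and ℓ+1 ∉ {i, j} such that ℓ and ℓ+1 are either both in-neighbours of i or both out-neighbours of i in W_u. Then either d(a) > 1 or ℓ = 2j − i − 1. -/
namespace WT8

variable {m : ℕ}

/-- The governing potential: `P u w` iff `h(w) = 1` in the informal analysis. -/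
def P (hm : 0 < m) (u : Fin m → ZMod 2) (w : ZMod (2 * m)) : Prop :=
  u ⟨w.val % m, Nat.mod_lt _ hm⟩ = if w.val < m then 0 else 1

lemma P_congr (hm : 0 < m) (u : Fin m → ZMod 2) {w : ZMod (2*m)} {t : ℕ}
    (h : w.val = t) :
    P hm u w ↔ (u ⟨t % m, Nat.mod_lt _ hm⟩ = if t < m then 0 else 1) := by
  subst h; rfl

lemma z2cases (x : ZMod 2) : x = 0 ∨ x = 1 := by revert x; decide
lemma z2one_ne_zero : ¬ (1 : ZMod 2) = 0 := by decide
lemma z2zero_ne_one : ¬ (0 : ZMod 2) = 1 := by decide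

lemma cast_eq_cases (hm : 0 < m) {a b : ℕ} (ha : a < 2*(2*m)) (hb : b < 2*(2*m)) :
    ((a : ZMod (2*m)) = (b : ZMod (2*m))) ↔ (a = b ∨ a = b + 2*m ∨ b = a + 2*m) := by
  rw [ZMod.natCast_eq_natCast_iff']
  rcases Nat.lt_or_ge a (2*m) with h1 | h1 <;> rcases Nat.lt_or_ge b (2*m) with h2 | h2
  · rw [Nat.mod_eq_of_lt h1, Nat.mod_eq_of_lt h2]; omega
  · rw [Nat.mod_eq_of_lt h1, Nat.mod_eq_sub_mod h2, Nat.mod_eq_of_lt (by omega)]; omega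
  · rw [Nat.mod_eq_of_lt h2, Nat.mod_eq_sub_mod h1, Nat.mod_eq_of_lt (by omega)]; omega
  · rw [Nat.mod_eq_sub_mod h1, Nat.mod_eq_of_lt (by omega),
      Nat.mod_eq_sub_mod h2, Nat.mod_eq_of_lt (by omega)]; omega

lemma cast2m_eq_zero : ((2*m : ℕ) : ZMod (2*m)) = 0 := ZMod.natCast_self (2*m)

lemma val_cast_small {a : ℕ} (h : a < 2*m) : ((a : ZMod (2*m))).val = a :=
  ZMod.val_natCast_of_lt h

/-- Antiperiodicity of `P`. -/
lemma Pm (hm : 0 < m) (u : Fin m → ZMod 2) (w : ZMod (2*m)) :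
    P hm u (w + ((m:ℕ) : ZMod (2*m))) ↔ ¬ P hm u w := by
  haveI : NeZero (2*m) := ⟨by omega⟩
  have hvm : ((m:ℕ) : ZMod (2*m)).val = m := val_cast_small (by omega)
  have hw : w.val < 2*m := ZMod.val_lt w
  have hval : (w + ((m:ℕ) : ZMod (2*m))).val = (w.val + m) % (2*m) := by
    rw [ZMod.val_add, hvm]
  rcases Nat.lt_or_ge w.val m with h | h
  · have h2 : (w.val + m) % (2*m) = w.val + m := Nat.mod_eq_of_lt (by omega)
    have hidx : (w.val + m) % m = w.val % m := Nat.add_mod_right _ _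
    rw [P_congr hm u (hval.trans h2), P_congr hm u (rfl : w.val = w.val)]
    have he : (⟨(w.val + m) % m, Nat.mod_lt _ hm⟩ : Fin m) = ⟨w.val % m, Nat.mod_lt _ hm⟩ :=
      Fin.ext hidx
    rw [he, if_neg (by omega), if_pos h]
    constructor
    · intro h1 h0; rw [h0] at h1; exact z2zero_ne_one h1
    · intro h1; rcases z2cases (u ⟨w.val % m, Nat.mod_lt _ hm⟩) with h0 | h0
      · exact absurd h0 h1
      · exact h0
  · have h2 : (w.val + m) % (2*m) = w.val - m := by
      rw [Nat.mod_eq_sub_mod (by omega), Nat.mod_eq_of_lt (by omega)]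
      omega
    have hidx : (w.val - m) % m = w.val % m := by
      conv_rhs => rw [show w.val = (w.val - m) + m from by omega]
      rw [Nat.add_mod_right]
    rw [P_congr hm u (hval.trans h2), P_congr hm u (rfl : w.val = w.val)]
    have he : (⟨(w.val - m) % m, Nat.mod_lt _ hm⟩ : Fin m) = ⟨w.val % m, Nat.mod_lt _ hm⟩ :=
      Fin.ext hidx
    rw [he, if_pos (by omega), if_neg (by omega)]
    constructor
    · intro h1 h0; rw [h0] at h1; exact z2one_ne_zero h1
    · intro h1; rcases z2cases (u ⟨w.val % m, Nat.mod_lt _ hm⟩) with h0 | h0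
      · exact h0
      · exact absurd h0 h1

end WT8

namespace WT8
variable {m : ℕ}

lemma cast_val_eq (hm : 0 < m) (w : ZMod (2*m)) : ((w.val : ℕ) : ZMod (2*m)) = w := by
  haveI : NeZero (2*m) := ⟨by omega⟩
  exact ZMod.natCast_rightInverse w

lemma P_at_low (hm : 0 < m) (u : Fin m → ZMod 2) (j : Fin m) :
    P hm u ((j:ℕ) : ZMod (2*m)) ↔ u j = 0 := by
  rw [P_congr hm u (val_cast_small (by have := j.isLt; omega))]
  have he : (⟨(j:ℕ) % m, Nat.mod_lt _ hm⟩ : Fin m) = j :=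
    Fin.ext (Nat.mod_eq_of_lt j.isLt)
  rw [he, if_pos j.isLt]

lemma P_at_high (hm : 0 < m) (u : Fin m → ZMod 2) (j : Fin m) :
    P hm u (((j:ℕ) : ZMod (2*m)) + ((m:ℕ) : ZMod (2*m))) ↔ u j = 1 := by
  haveI : NeZero (2*m) := ⟨by omega⟩
  have hv : (((j:ℕ) : ZMod (2*m)) + ((m:ℕ) : ZMod (2*m))).val = (j:ℕ) + m := by
    rw [ZMod.val_add, val_cast_small (by have := j.isLt; omega),
      val_cast_small (by omega), Nat.mod_eq_of_lt (by have := j.isLt; omega)]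
  rw [P_congr hm u hv]
  have he : (⟨((j:ℕ) + m) % m, Nat.mod_lt _ hm⟩ : Fin m) = j :=
    Fin.ext (show ((j:ℕ) + m) % m = (j:ℕ) by
      rw [Nat.add_mod_right]; exact Nat.mod_eq_of_lt j.isLt)
  rw [he, if_neg (by omega)]

lemma u_ne_zero {u : Fin m → ZMod 2} {j : Fin m} (h : u j = 1) : ¬ u j = 0 := by
  rw [h]; exact z2one_ne_zero

lemma u_ne_one {u : Fin m → ZMod 2} {j : Fin m} (h : u j = 0) : ¬ u j = 1 := by
  rw [h]; exact z2zero_ne_one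

lemma warc_none_some (hm : 0 < m) (u : Fin m → ZMod 2) (q : ZMod (2*m)) :
    warc m u none (some q) ↔ ¬ P hm u q := by
  haveI : NeZero (2*m) := ⟨by omega⟩
  constructor
  · rintro ⟨j, ⟨hj, hc⟩ | ⟨hj, hc⟩⟩
    · rcases hc with ⟨_, hy⟩ | ⟨hx, _⟩ | ⟨k, _, hx, _⟩ | ⟨k, _, _, hx, _⟩
      · rw [(Option.some.injEq .. ▸ hy : q = _)]
        rw [P_at_low hm u j]
        exact u_ne_zero hj
      all_goals exact absurd hx (by simp)
    · rcases hc with ⟨hx, _⟩ | ⟨hx, hy⟩ | ⟨k, _, _, hy⟩ | ⟨k, _, _, _, hy⟩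
      · exact absurd hx (by simp)
      · rw [(Option.some.injEq .. ▸ hx : q = _)]
        rw [show ((j:ℕ) : ZMod (2*m)) + (m : ZMod (2*m)) =
          ((j:ℕ) : ZMod (2*m)) + ((m:ℕ) : ZMod (2*m)) from by push_cast; ring]
        rw [P_at_high hm u j]
        exact u_ne_one hj
      all_goals exact absurd hy (by simp)
  · intro hP
    rcases Nat.lt_or_ge q.val m with h | h
    · refine ⟨⟨q.val, h⟩, Or.inl ⟨?_, Or.inl ⟨rfl, by rw [cast_val_eq hm]⟩⟩⟩
      by_contra h1
      rcases z2cases (u ⟨q.val, h⟩) with h0 | h0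
      · exact hP (by
          rw [show q = (((⟨q.val, h⟩ : Fin m) : ℕ) : ZMod (2*m)) from (cast_val_eq hm q).symm,
            P_at_low hm u]
          exact h0)
      · exact h1 h0
    · have hql : q.val - m < m := by have := ZMod.val_lt q; omega
      refine ⟨⟨q.val - m, hql⟩, Or.inr ⟨?_, Or.inr (Or.inl ⟨?_, rfl⟩)⟩⟩
      · by_contra h1
        rcases z2cases (u ⟨q.val - m, hql⟩) with h0 | h0
        · exact h1 h0
        · exact hP (by
            rw [show q = (((⟨q.val - m, hql⟩ : Fin m) : ℕ) : ZMod (2*m)) + ((m:ℕ) : ZMod (2*m))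
              from by
                rw [← Nat.cast_add]
                simp only [Fin.val_mk]
                rw [show q.val - m + m = q.val from by omega, cast_val_eq hm],
              P_at_high hm u]
            exact h0)
      · rw [show ((⟨q.val - m, hql⟩ : Fin m) : ℕ) = q.val - m from rfl]
        rw [show (((q.val - m : ℕ)) : ZMod (2*m)) + ((m : ZMod (2*m))) =
          (((q.val - m + m : ℕ)) : ZMod (2*m)) from by push_cast; ring]
        rw [show q.val - m + m = q.val from by omega, cast_val_eq hm]

lemma warc_some_none (hm : 0 < m) (u : Fin m → ZMod 2) (p : ZMod (2*m)) :
    warc m u (some p) none ↔ P hm u p := by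
  haveI : NeZero (2*m) := ⟨by omega⟩
  constructor
  · rintro ⟨j, ⟨hj, hc⟩ | ⟨hj, hc⟩⟩
    · rcases hc with ⟨_, hy⟩ | ⟨hx, _⟩ | ⟨k, _, _, hy⟩ | ⟨k, _, _, _, hy⟩
      · exact absurd hy (by simp)
      · rw [(Option.some.injEq .. ▸ hx : p = _)]
        rw [show ((j:ℕ) : ZMod (2*m)) + (m : ZMod (2*m)) =
          ((j:ℕ) : ZMod (2*m)) + ((m:ℕ) : ZMod (2*m)) from by push_cast; ring]
        rw [P_at_high hm u j]
        exact hj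
      all_goals exact absurd hy (by simp)
    · rcases hc with ⟨_, hy⟩ | ⟨hx, _⟩ | ⟨k, _, hx, _⟩ | ⟨k, _, _, hx, _⟩
      · rw [(Option.some.injEq .. ▸ hy : p = _)]
        rw [P_at_low hm u j]
        exact hj
      all_goals first
        | exact absurd hx (by simp)
        | exact absurd hx (by simp)
  · intro hP
    rcases Nat.lt_or_ge p.val m with h | h
    · refine ⟨⟨p.val, h⟩, Or.inr ⟨?_, Or.inl ⟨rfl, by rw [cast_val_eq hm]⟩⟩⟩
      rw [show p = (((⟨p.val, h⟩ : Fin m) : ℕ) : ZMod (2*m)) from (cast_val_eq hm p).symm,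
        P_at_low hm u] at hP
      exact hP
    · have hql : p.val - m < m := by have := ZMod.val_lt p; omega
      refine ⟨⟨p.val - m, hql⟩, Or.inl ⟨?_, Or.inr (Or.inl ⟨?_, rfl⟩)⟩⟩
      · rw [show p = (((⟨p.val - m, hql⟩ : Fin m) : ℕ) : ZMod (2*m)) + ((m:ℕ) : ZMod (2*m))
          from by
            rw [← Nat.cast_add]
            simp only [Fin.val_mk]
            rw [show p.val - m + m = p.val from by omega, cast_val_eq hm],
          P_at_high hm u] at hP
        exact hP
      · rw [show ((⟨p.val - m, hql⟩ : Fin m) : ℕ) = p.val - m from rfl]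
        rw [show (((p.val - m : ℕ)) : ZMod (2*m)) + ((m : ZMod (2*m))) =
          (((p.val - m + m : ℕ)) : ZMod (2*m)) from by push_cast; ring]
        rw [show p.val - m + m = p.val from by omega, cast_val_eq hm]

end WT8

namespace WT8
variable {m : ℕ}

/-- Normal form: `warc (some p) (some q)` iff `q = p + (2r+1)` with `¬P (p+r)`,
or `q = p + 2r` (`1 ≤ r`) with `P (p+r)`. -/
lemma warc_some_some (hm : 0 < m) (u : Fin m → ZMod 2) (p q : ZMod (2*m)) :
    warc m u (some p) (some q) ↔ ∃ r : ℕ, r < m ∧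
      ((q = p + ((2*r+1 : ℕ) : ZMod (2*m)) ∧ ¬ P hm u (p + ((r:ℕ) : ZMod (2*m)))) ∨
       (1 ≤ r ∧ q = p + ((2*r : ℕ) : ZMod (2*m)) ∧ P hm u (p + ((r:ℕ) : ZMod (2*m))))) := by
  haveI : NeZero (2*m) := ⟨by omega⟩
  constructor
  · rintro ⟨j, ⟨hj, hc⟩ | ⟨hj, hc⟩⟩
    · rcases hc with ⟨hx, _⟩ | ⟨_, hy⟩ | ⟨k, hk, hx, hy⟩ | ⟨k, hk1, hk, hx, hy⟩
      · exact absurd hx (by simp)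
      · exact absurd hy (by simp)
      · -- p = j - k, q = j + k + 1 : odd, r = k
        have hp : p = ((j:ℕ) : ZMod (2*m)) - ((k:ℕ) : ZMod (2*m)) := by
          have := Option.some.injEq .. ▸ hx; exact (Option.some_inj.mp hx).symm ▸ rfl
        have hq : q = ((j:ℕ) : ZMod (2*m)) + ((k:ℕ) : ZMod (2*m)) + 1 :=
          Option.some_inj.mp hy
        refine ⟨k, by omega, Or.inl ⟨?_, ?_⟩⟩
        · rw [hq, (Option.some_inj.mp hx : p = _)]; push_cast; ring
        · rw [(Option.some_inj.mp hx : p = _)]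
          have : ((j:ℕ) : ZMod (2*m)) - ((k:ℕ) : ZMod (2*m)) + ((k:ℕ) : ZMod (2*m))
              = ((j:ℕ) : ZMod (2*m)) := by ring
          rw [this, P_at_low hm u j]
          exact u_ne_zero hj
      · -- p = j + k, q = j - k : even, r = m - k
        refine ⟨m - k, by omega, Or.inr ⟨by omega, ?_, ?_⟩⟩
        · rw [(Option.some_inj.mp hy : q = _), (Option.some_inj.mp hx : p = _)]
          have : ((2*(m-k) : ℕ) : ZMod (2*m)) = ((2*m : ℕ) : ZMod (2*m)) -
              (((2*k : ℕ)) : ZMod (2*m)) := by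
            rw [← Nat.cast_sub (by omega)]
            congr 1
            omega
          rw [this, cast2m_eq_zero]
          push_cast
          ring
        · rw [(Option.some_inj.mp hx : p = _)]
          have : ((j:ℕ) : ZMod (2*m)) + ((k:ℕ) : ZMod (2*m)) + (((m-k:ℕ)) : ZMod (2*m))
              = ((j:ℕ) : ZMod (2*m)) + ((m:ℕ) : ZMod (2*m)) := by
            rw [← Nat.cast_add, ← Nat.cast_add,
              show (j:ℕ) + k + (m-k) = (j:ℕ) + m from by omega, Nat.cast_add]
          rw [this, P_at_high hm u j]
          exact hj
    · rcases hc with ⟨hx, _⟩ | ⟨_, hy⟩ | ⟨k, hk, hx, hy⟩ | ⟨k, hk1, hk, hx, hy⟩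
      · exact absurd hx (by simp)
      · exact absurd hy (by simp)
      · -- reversed: q = j - k, p = j + k + 1 : odd, r = m - 1 - k
        refine ⟨m - 1 - k, by omega, Or.inl ⟨?_, ?_⟩⟩
        · rw [(Option.some_inj.mp hy : p = _), (Option.some_inj.mp hx : q = _)]
          have : ((2*(m-1-k)+1 : ℕ) : ZMod (2*m)) = ((2*m : ℕ) : ZMod (2*m)) -
              (((2*k+1 : ℕ)) : ZMod (2*m)) := by
            rw [← Nat.cast_sub (by omega)]
            congr 1
            omega
          rw [this, cast2m_eq_zero]
          push_cast
          ring
        · rw [(Option.some_inj.mp hy : p = _)]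
          have : ((j:ℕ) : ZMod (2*m)) + ((k:ℕ) : ZMod (2*m)) + 1 +
              (((m-1-k:ℕ)) : ZMod (2*m)) = ((j:ℕ) : ZMod (2*m)) + ((m:ℕ) : ZMod (2*m)) := by
            have : ((k:ℕ) : ZMod (2*m)) + 1 + (((m-1-k:ℕ)) : ZMod (2*m))
                = ((m:ℕ) : ZMod (2*m)) := by
              rw [show ((1 : ZMod (2*m))) = ((1:ℕ) : ZMod (2*m)) from by push_cast; ring,
                ← Nat.cast_add, ← Nat.cast_add, show (k:ℕ) + 1 + (m-1-k) = m from by omega]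
            rw [add_assoc, add_assoc, ← add_assoc ((k:ℕ) : ZMod (2*m)), this]
          rw [this, P_at_high hm u j]
          exact u_ne_one hj
      · -- reversed: q = j + k, p = j - k : even, r = k
        refine ⟨k, by omega, Or.inr ⟨hk1, ?_, ?_⟩⟩
        · rw [(Option.some_inj.mp hy : p = _), (Option.some_inj.mp hx : q = _)]
          push_cast
          ring
        · rw [(Option.some_inj.mp hy : p = _)]
          have : ((j:ℕ) : ZMod (2*m)) - ((k:ℕ) : ZMod (2*m)) + ((k:ℕ) : ZMod (2*m))
              = ((j:ℕ) : ZMod (2*m)) := by ring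
          rw [this, P_at_low hm u j]
          exact hj
  · rintro ⟨r, hr, ⟨hq, hP⟩ | ⟨hr1, hq, hP⟩⟩
    · -- odd case
      set w := p + ((r:ℕ) : ZMod (2*m)) with hw
      rcases Nat.lt_or_ge w.val m with h | h
      · -- u j = 1, C+ : p = j - r, q = j + r + 1 with j = w
        have hcast : (((⟨w.val, h⟩ : Fin m) : ℕ) : ZMod (2*m)) = w := cast_val_eq hm w
        have hu : u ⟨w.val, h⟩ = 1 := by
          rcases z2cases (u ⟨w.val, h⟩) with h0 | h0
          · exact absurd (by rw [show w = (((⟨w.val, h⟩ : Fin m) : ℕ) : ZMod (2*m)) from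
              hcast.symm, P_at_low hm u]; exact h0) hP
          · exact h0
        refine ⟨⟨w.val, h⟩, Or.inl ⟨hu, Or.inr (Or.inr (Or.inl ⟨r, by omega, ?_, ?_⟩))⟩⟩
        · rw [hcast]; congr 1; rw [hw]; ring
        · rw [hcast, hq]; congr 1; rw [hw]; push_cast; ring
      · -- u j = 0, C- : q = j - (m-1-r), p = j + (m-1-r) + 1 with j = w - m
        have hwv : w.val - m < m := by have := ZMod.val_lt w; omega
        have hcast : (((⟨w.val - m, hwv⟩ : Fin m) : ℕ) : ZMod (2*m))
            = w - ((m:ℕ) : ZMod (2*m)) := by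
          simp only [Fin.val_mk]
          rw [show ((w.val - m : ℕ) : ZMod (2*m)) = ((w.val : ℕ) : ZMod (2*m)) -
            ((m:ℕ) : ZMod (2*m)) from by
              rw [← Nat.cast_sub (by omega)], cast_val_eq hm]
        have hu : u ⟨w.val - m, hwv⟩ = 0 := by
          rcases z2cases (u ⟨w.val - m, hwv⟩) with h0 | h0
          · exact h0
          · exact absurd (by
              rw [show w = (((⟨w.val - m, hwv⟩ : Fin m) : ℕ) : ZMod (2*m)) +
                ((m:ℕ) : ZMod (2*m)) from by rw [hcast]; ring, P_at_high hm u]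
              exact h0) hP
        refine ⟨⟨w.val - m, hwv⟩, Or.inr ⟨hu, Or.inr (Or.inr (Or.inl
          ⟨m - 1 - r, by omega, ?_, ?_⟩))⟩⟩
        · -- q = j - (m-1-r) : j - (m-1-r) = w - m - (m-1-r) = w + r + 1 - 2m = p + 2r+1
          rw [hcast, hq]
          congr 1
          rw [hw]
          have : ((2*r+1 : ℕ) : ZMod (2*m)) = ((r:ℕ) : ZMod (2*m)) + ((r:ℕ) : ZMod (2*m)) + 1 := by
            push_cast; ring
          rw [this]
          have h2m0 : ((m:ℕ) : ZMod (2*m)) + ((m:ℕ) : ZMod (2*m)) = 0 := by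
            rw [← Nat.cast_add, show m + m = 2*m from by ring, cast2m_eq_zero]
          have : (((m-1-r : ℕ)) : ZMod (2*m)) = ((m:ℕ) : ZMod (2*m)) - 1 - ((r:ℕ) : ZMod (2*m)) := by
            rw [show ((1 : ZMod (2*m))) = ((1:ℕ) : ZMod (2*m)) from by push_cast; ring,
              ← Nat.cast_sub (by omega), ← Nat.cast_sub (by omega)]
          rw [this]
          linear_combination h2m0
        · -- p = j + (m-1-r) + 1 = w - m + m - 1 - r + 1 = w - r = p ✓
          rw [hcast]
          rw [hw]
          have : (((m-1-r : ℕ)) : ZMod (2*m)) = ((m:ℕ) : ZMod (2*m)) - 1 - ((r:ℕ) : ZMod (2*m)) := by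
            rw [show ((1 : ZMod (2*m))) = ((1:ℕ) : ZMod (2*m)) from by push_cast; ring,
              ← Nat.cast_sub (by omega), ← Nat.cast_sub (by omega)]
          rw [this]
          congr 1
          ring
    · -- even case
      set w := p + ((r:ℕ) : ZMod (2*m)) with hw
      rcases Nat.lt_or_ge w.val m with h | h
      · -- u j = 0, C- with k = r : q = j + r, p = j - r, j = w
        have hcast : (((⟨w.val, h⟩ : Fin m) : ℕ) : ZMod (2*m)) = w := cast_val_eq hm w
        have hu : u ⟨w.val, h⟩ = 0 := by
          rcases z2cases (u ⟨w.val, h⟩) with h0 | h0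
          · exact h0
          · exfalso
            rw [show w = (((⟨w.val, h⟩ : Fin m) : ℕ) : ZMod (2*m)) from hcast.symm,
              P_at_low hm u] at hP
            rw [h0] at hP
            exact z2one_ne_zero hP
        refine ⟨⟨w.val, h⟩, Or.inr ⟨hu, Or.inr (Or.inr (Or.inr ⟨r, hr1, by omega, ?_, ?_⟩))⟩⟩
        · rw [hcast, hq]; congr 1; rw [hw]; push_cast; ring
        · rw [hcast]; congr 1; rw [hw]; ring
      · -- u j = 1, C+ with k = m - r : p = j + (m-r), q = j - (m-r), j = w - m
        have hwv : w.val - m < m := by have := ZMod.val_lt w; omega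
        have hcast : (((⟨w.val - m, hwv⟩ : Fin m) : ℕ) : ZMod (2*m))
            = w - ((m:ℕ) : ZMod (2*m)) := by
          simp only [Fin.val_mk]
          rw [show ((w.val - m : ℕ) : ZMod (2*m)) = ((w.val : ℕ) : ZMod (2*m)) -
            ((m:ℕ) : ZMod (2*m)) from by
              rw [← Nat.cast_sub (by omega)], cast_val_eq hm]
        have hu : u ⟨w.val - m, hwv⟩ = 1 := by
          rcases z2cases (u ⟨w.val - m, hwv⟩) with h0 | h0
          · exfalso
            rw [show w = (((⟨w.val - m, hwv⟩ : Fin m) : ℕ) : ZMod (2*m)) +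
              ((m:ℕ) : ZMod (2*m)) from by rw [hcast]; ring, P_at_high hm u] at hP
            exact z2zero_ne_one (h0.symm.trans hP)
          · exact h0
        refine ⟨⟨w.val - m, hwv⟩, Or.inl ⟨hu, Or.inr (Or.inr (Or.inr
          ⟨m - r, by omega, by omega, ?_, ?_⟩))⟩⟩
        · -- p = j + (m - r) = w - m + m - r = w - r = p ✓
          rw [hcast]
          have : (((m-r : ℕ)) : ZMod (2*m)) = ((m:ℕ) : ZMod (2*m)) - ((r:ℕ) : ZMod (2*m)) := by
            rw [← Nat.cast_sub (by omega)]
          rw [this, hw]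
          congr 1
          ring
        · -- q = j - (m - r) = w - m - m + r = w + r - 2m = p + 2r ✓
          rw [hcast, hq]
          have : (((m-r : ℕ)) : ZMod (2*m)) = ((m:ℕ) : ZMod (2*m)) - ((r:ℕ) : ZMod (2*m)) := by
            rw [← Nat.cast_sub (by omega)]
          rw [this, hw]
          congr 1
          have h2m0 : ((m:ℕ) : ZMod (2*m)) + ((m:ℕ) : ZMod (2*m)) = 0 := by
            rw [← Nat.cast_add, show m + m = 2*m from by ring, cast2m_eq_zero]
          have : ((2*r : ℕ) : ZMod (2*m)) = ((r:ℕ) : ZMod (2*m)) + ((r:ℕ) : ZMod (2*m)) := by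
            push_cast; ring
          rw [this]
          linear_combination h2m0

end WT8

namespace WT8
variable {m : ℕ}

lemma addc (p : ZMod (2*m)) (a b : ℕ) :
    p + (a : ZMod (2*m)) + (b : ZMod (2*m)) = p + ((a+b : ℕ) : ZMod (2*m)) := by
  push_cast; ring

lemma cast_cancel (hm : 0 < m) {p : ZMod (2*m)} {a b : ℕ}
    (ha : a < 2*(2*m)) (hb : b < 2*(2*m))
    (h : p + (a : ZMod (2*m)) = p + (b : ZMod (2*m))) :
    a = b ∨ a = b + 2*m ∨ b = a + 2*m :=
  (cast_eq_cases hm ha hb).mp (add_left_cancel h)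

lemma self_eq_add_cast (hm : 0 < m) {p : ZMod (2*m)} {a : ℕ} (ha : a < 2*(2*m))
    (h : p = p + (a : ZMod (2*m))) : a = 0 ∨ a = 2*m := by
  have h0 : p + ((0:ℕ) : ZMod (2*m)) = p + (a : ZMod (2*m)) := by
    simpa using h
  rcases cast_cancel hm (by omega) ha h0 with h1 | h1 | h1 <;> omega

lemma P_add_m (hm : 0 < m) (u : Fin m → ZMod 2) (p : ZMod (2*m)) (a : ℕ) :
    P hm u (p + ((a + m : ℕ) : ZMod (2*m))) ↔ ¬ P hm u (p + (a : ℕ)) := by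
  rw [← addc, Pm]

lemma cast20 : ((2*m : ℕ) : ZMod (2*m)) = ((0:ℕ) : ZMod (2*m)) := by
  simpa using cast2m_eq_zero (m := m)

/-- arc `(p+2r+1) → p` iff `P (p+r)` -/
lemma warc_odd_in (hm : 0 < m) (u : Fin m → ZMod 2) (p : ZMod (2*m)) {r : ℕ} (hr : r < m) :
    warc m u (some (p + ((2*r+1:ℕ) : ZMod (2*m)))) (some p) ↔
      P hm u (p + ((r:ℕ) : ZMod (2*m))) := by
  rw [warc_some_some hm u _ p]
  constructor
  · rintro ⟨r', hr', ⟨hq, hP⟩ | ⟨hr1, hq, hP⟩⟩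
    · rw [addc] at hq
      rcases self_eq_add_cast hm (by omega) hq with h1 | h1
      · omega
      · have hr'' : r' = m - 1 - r := by omega
        subst hr''
        rw [addc, show 2*r+1+(m-1-r) = r + m from by omega, P_add_m hm u] at hP
        exact not_not.mp hP
    · rw [addc] at hq
      rcases self_eq_add_cast hm (by omega) hq with h1 | h1 <;> omega
  · intro hP
    refine ⟨m-1-r, by omega, Or.inl ⟨?_, ?_⟩⟩
    · rw [addc, show 2*r+1+(2*(m-1-r)+1) = 2*m from by omega, cast20]
      simp
    · rw [addc, show 2*r+1+(m-1-r) = r + m from by omega, P_add_m hm u]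
      exact not_not.mpr hP

/-- arc `p → (p+2r+1)` iff `¬ P (p+r)` -/
lemma warc_odd_out (hm : 0 < m) (u : Fin m → ZMod 2) (p : ZMod (2*m)) {r : ℕ} (hr : r < m) :
    warc m u (some p) (some (p + ((2*r+1:ℕ) : ZMod (2*m)))) ↔
      ¬ P hm u (p + ((r:ℕ) : ZMod (2*m))) := by
  rw [warc_some_some hm u p _]
  constructor
  · rintro ⟨r', hr', ⟨hq, hP⟩ | ⟨hr1, hq, hP⟩⟩
    · rcases cast_cancel hm (by omega) (by omega) hq with h1 | h1 | h1
      · have : r' = r := by omega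
        subst this; exact hP
      all_goals omega
    · rcases cast_cancel hm (by omega) (by omega) hq with h1 | h1 | h1 <;> omega
  · intro hP
    exact ⟨r, hr, Or.inl ⟨rfl, hP⟩⟩

/-- arc `(p+2r) → p` iff `¬ P (p+r)`, for `1 ≤ r < m` -/
lemma warc_even_in (hm : 0 < m) (u : Fin m → ZMod 2) (p : ZMod (2*m)) {r : ℕ}
    (hr1 : 1 ≤ r) (hr : r < m) :
    warc m u (some (p + ((2*r:ℕ) : ZMod (2*m)))) (some p) ↔
      ¬ P hm u (p + ((r:ℕ) : ZMod (2*m))) := by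
  rw [warc_some_some hm u _ p]
  constructor
  · rintro ⟨r', hr', ⟨hq, hP⟩ | ⟨hr1', hq, hP⟩⟩
    · rw [addc] at hq
      rcases self_eq_add_cast hm (by omega) hq with h1 | h1 <;> omega
    · rw [addc] at hq
      rcases self_eq_add_cast hm (by omega) hq with h1 | h1
      · omega
      · have hr'' : r' = m - r := by omega
        subst hr''
        rw [addc, show 2*r+(m-r) = r + m from by omega, P_add_m hm u] at hP
        exact hP
  · intro hP
    refine ⟨m-r, by omega, Or.inr ⟨by omega, ?_, ?_⟩⟩
    · rw [addc, show 2*r+2*(m-r) = 2*m from by omega, cast20]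
      simp
    · rw [addc, show 2*r+(m-r) = r + m from by omega, P_add_m hm u]
      exact hP

/-- arc `p → (p+2r)` iff `P (p+r)`, for `1 ≤ r < m` -/
lemma warc_even_out (hm : 0 < m) (u : Fin m → ZMod 2) (p : ZMod (2*m)) {r : ℕ}
    (hr1 : 1 ≤ r) (hr : r < m) :
    warc m u (some p) (some (p + ((2*r:ℕ) : ZMod (2*m)))) ↔
      P hm u (p + ((r:ℕ) : ZMod (2*m))) := by
  rw [warc_some_some hm u p _]
  constructor
  · rintro ⟨r', hr', ⟨hq, hP⟩ | ⟨hr1', hq, hP⟩⟩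
    · rcases cast_cancel hm (by omega) (by omega) hq with h1 | h1 | h1 <;> omega
    · rcases cast_cancel hm (by omega) (by omega) hq with h1 | h1 | h1
      · have : r' = r := by omega
        subst this; exact hP
      all_goals omega
  · intro hP
    exact ⟨r, hr, Or.inr ⟨hr1, rfl, hP⟩⟩

/-- Decomposition of any `w ≠ p` as odd or even offset. -/
lemma decomp (hm : 0 < m) {w p : ZMod (2*m)} (hne : w ≠ p) :
    ∃ r : ℕ, (r < m ∧ w = p + ((2*r+1:ℕ) : ZMod (2*m))) ∨
      (1 ≤ r ∧ r < m ∧ w = p + ((2*r:ℕ) : ZMod (2*m))) := by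
  haveI : NeZero (2*m) := ⟨by omega⟩
  set d := (w - p).val with hd
  have hdlt : d < 2*m := ZMod.val_lt _
  have hd0 : d ≠ 0 := by
    intro h0
    apply hne
    have : ((d:ℕ) : ZMod (2*m)) = w - p := cast_val_eq hm _
    rw [h0] at this
    simp only [Nat.cast_zero] at this
    have := this.symm
    rwa [sub_eq_zero] at this
  have hw : w = p + ((d:ℕ) : ZMod (2*m)) := by
    rw [hd, cast_val_eq hm]
    ring
  rcases Nat.even_or_odd d with ⟨c, hc⟩ | ⟨c, hc⟩
  · refine ⟨c, Or.inr ⟨by omega, by omega, ?_⟩⟩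
    rw [hw, show d = 2*c from by omega]
  · refine ⟨c, Or.inl ⟨by omega, ?_⟩⟩
    rw [hw, show d = 2*c+1 from by omega]

end WT8

namespace WT8
variable {m : ℕ}

lemma warc_asym (hm : 0 < m) (u : Fin m → ZMod 2) (v : ZMod (2*m)) (z : WVert m)
    (hz : z ≠ some v) : warc m u z (some v) ↔ ¬ warc m u (some v) z := by
  cases z with
  | none => rw [warc_none_some hm u, warc_some_none hm u]
  | some w =>
    have hw : w ≠ v := by simpa using hz
    obtain ⟨r, ⟨hr, hweq⟩ | ⟨hr1, hr, hweq⟩⟩ := decomp hm hw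
    · rw [hweq, warc_odd_in hm u v hr, warc_odd_out hm u v hr]
      tauto
    · rw [hweq, warc_even_in hm u v hr1 hr, warc_even_out hm u v hr1 hr]

/-- The in-neighbourhood of a circle vertex has exactly `m` elements. -/
lemma inSet_card (hm : 0 < m) (u : Fin m → ZMod 2) (v : ZMod (2*m)) :
    {z : WVert m | z ≠ some v ∧ warc m u z (some v)}.ncard = m := by
  haveI : NeZero (2*m) := ⟨by omega⟩
  classical
  set φ : Fin m → WVert m := fun r =>
    if P hm u (v + ((r:ℕ) : ZMod (2*m))) then some (v + ((2*(r:ℕ)+1 : ℕ) : ZMod (2*m)))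
    else if (r:ℕ) = 0 then none else some (v + ((2*(r:ℕ) : ℕ) : ZMod (2*m))) with hφ
  have hinj : Function.Injective φ := by
    intro r1 r2 h
    apply Fin.ext
    simp only [hφ] at h
    split_ifs at h <;>
      first
      | exact Option.noConfusion h
      | omega
      | (rcases cast_cancel hm (by have := r1.isLt; omega) (by have := r2.isLt; omega)
          (Option.some_inj.mp h) with hc | hc | hc <;>
          (have := r1.isLt; have := r2.isLt; omega))
  have hrange : {z : WVert m | z ≠ some v ∧ warc m u z (some v)} = Set.range φ := by
    ext z
    simp only [Set.mem_setOf_eq, Set.mem_range]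
    constructor
    · rintro ⟨hz, hwz⟩
      cases z with
      | none =>
        rw [warc_none_some hm u] at hwz
        refine ⟨⟨0, hm⟩, ?_⟩
        simp only [hφ]
        rw [if_neg (by simpa using hwz)]
        rfl
      | some w =>
        have hw : w ≠ v := by simpa using hz
        obtain ⟨r, ⟨hr, hweq⟩ | ⟨hr1, hr, hweq⟩⟩ := decomp hm hw
        · rw [hweq, warc_odd_in hm u v hr] at hwz
          refine ⟨⟨r, hr⟩, ?_⟩
          simp only [hφ]
          rw [if_pos hwz, hweq]
        · rw [hweq, warc_even_in hm u v hr1 hr] at hwz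
          refine ⟨⟨r, hr⟩, ?_⟩
          simp only [hφ]
          rw [if_neg hwz, if_neg (show ¬ ((⟨r, hr⟩ : Fin m) : ℕ) = 0 from by
            simp only [Fin.val_mk]; omega), hweq]
    · rintro ⟨r, rfl⟩
      simp only [hφ]
      split_ifs with h1 h2
      · refine ⟨?_, (warc_odd_in hm u v r.isLt).mpr h1⟩
        intro hc
        have h0 : v + ((2*(r:ℕ)+1 : ℕ) : ZMod (2*m)) = v + ((0:ℕ) : ZMod (2*m)) := by
          simpa using Option.some_inj.mp hc
        rcases cast_cancel hm (by have := r.isLt; omega) (by omega) h0 with hc' | hc' | hc' <;>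
          omega
      · refine ⟨by simp, ?_⟩
        rw [warc_none_some hm u]
        rw [h2] at h1
        simpa using h1
      · have hr1 : 1 ≤ (r:ℕ) := by omega
        refine ⟨?_, (warc_even_in hm u v hr1 r.isLt).mpr h1⟩
        intro hc
        have h0 : v + ((2*(r:ℕ) : ℕ) : ZMod (2*m)) = v + ((0:ℕ) : ZMod (2*m)) := by
          simpa using Option.some_inj.mp hc
        rcases cast_cancel hm (by have := r.isLt; omega) (by omega) h0 with hc' | hc' | hc' <;>
          (have := r.isLt; omega)
  rw [hrange, ← Set.image_univ, Set.ncard_image_of_injective _ hinj, Set.ncard_univ,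
    Nat.card_eq_fintype_card, Fintype.card_fin]

/-- The key identity `d(a) = b(a) + 1` for arcs between circle vertices. -/
lemma d_eq_b_succ (hm : 0 < m) (u : Fin m → ZMod 2) (p q : ZMod (2*m)) (hpq : p ≠ q)
    (harc : warc m u (some p) (some q)) :
    dcount (warc m u) (some p) (some q) = bcount (warc m u) (some p) (some q) + 1 := by
  haveI : NeZero (2*m) := ⟨by omega⟩
  classical
  set x : WVert m := some p
  set y : WVert m := some q
  have hxy : x ≠ y := by simp [x, y, hpq]
  have hyx_not : ¬ warc m u y x :=
    fun h => (warc_asym hm u p y (by simp [y, Ne.symm hpq])).mp h harc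
  set Sd := {z : WVert m | z ≠ x ∧ z ≠ y ∧ warc m u y z ∧ warc m u z x} with hSd
  set Si := {z : WVert m | z ≠ x ∧ z ≠ y ∧ warc m u z x ∧ warc m u z y} with hSi
  set Sb := {z : WVert m | z ≠ x ∧ z ≠ y ∧ warc m u x z ∧ warc m u z y} with hSb
  have hdisj1 : Disjoint Sd Si := by
    rw [Set.disjoint_left]
    rintro z ⟨_, hzy, hyz, _⟩ ⟨_, _, _, hzy2⟩
    exact (warc_asym hm u q z hzy).mp hzy2 hyz
  have hdisj2 : Disjoint Si Sb := by
    rw [Set.disjoint_left]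
    rintro z ⟨hzx, _, hzx2, _⟩ ⟨_, _, hxz, _⟩
    exact (warc_asym hm u p z hzx).mp hzx2 hxz
  have hU1 : Sd ∪ Si = {z : WVert m | z ≠ some p ∧ warc m u z (some p)} := by
    ext z
    simp only [hSd, hSi, Set.mem_union, Set.mem_setOf_eq]
    constructor
    · rintro (⟨hzx, _, _, hzx2⟩ | ⟨hzx, _, hzx2, _⟩) <;> exact ⟨hzx, hzx2⟩
    · rintro ⟨hzx, hzp⟩
      have hzy : z ≠ y := by
        rintro rfl
        exact hyx_not hzp
      by_cases hyz : warc m u y z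
      · exact Or.inl ⟨hzx, hzy, hyz, hzp⟩
      · refine Or.inr ⟨hzx, hzy, hzp, ?_⟩
        rw [warc_asym hm u q z hzy]
        exact hyz
  have hU2 : Si ∪ Sb = {z : WVert m | z ≠ some q ∧ warc m u z (some q)} \ {x} := by
    ext z
    simp only [hSi, hSb, Set.mem_union, Set.mem_setOf_eq, Set.mem_diff,
      Set.mem_singleton_iff]
    constructor
    · rintro (⟨hzx, hzy, _, hzy2⟩ | ⟨hzx, hzy, _, hzy2⟩) <;> exact ⟨⟨hzy, hzy2⟩, hzx⟩
    · rintro ⟨⟨hzy, hzq⟩, hzx⟩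
      by_cases hzp : warc m u z x
      · exact Or.inl ⟨hzx, hzy, hzp, hzq⟩
      · refine Or.inr ⟨hzx, hzy, ?_, hzq⟩
        exact not_not.mp (fun h => hzp ((warc_asym hm u p z hzx).mpr h))
  have hxin : x ∈ {z : WVert m | z ≠ some q ∧ warc m u z (some q)} := ⟨hxy, harc⟩
  have hc1 : Sd.ncard + Si.ncard = m := by
    rw [← Set.ncard_union_eq hdisj1 (Set.toFinite _) (Set.toFinite _), hU1, inSet_card hm u p]
  have hc2 : Si.ncard + Sb.ncard = m - 1 := by
    rw [← Set.ncard_union_eq hdisj2 (Set.toFinite _) (Set.toFinite _), hU2,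
      Set.ncard_diff_singleton_of_mem hxin, inSet_card hm u q]
  have hd : dcount (warc m u) x y = Sd.ncard := rfl
  have hb : bcount (warc m u) x y = Sb.ncard := rfl
  rw [hd, hb]
  omega

end WT8

namespace WT8

lemma core (m s r0 : ℕ) (K : ℕ → Prop)
    (hs1 : 1 ≤ s) (hs2 : s + 2 ≤ m)
    (hS : K s)
    (hA : ∀ r, r < s → K r → K (r+s+1))
    (hB : ∀ r, 1 ≤ r → r ≤ s → ¬ K r → ¬ K (r+s))
    (hC : ∀ r, s+1 ≤ r → r < m → K r → ¬ K (r+s+1))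
    (hD : ∀ r, s+1 ≤ r → r < m → ¬ K r → K (r+s))
    (hE : ¬ K 0 → ¬ K (2*s+1))
    (hanti : ∀ t, K (t+m) ↔ ¬ K t)
    (hr0 : r0 + 2 ≤ m) (hr0s : r0 ≠ s) (hr0e : r0 + m ≠ 2*s)
    (hwall : ¬ (K r0 ↔ K (r0+1))) : False := by
  classical
  -- no descents away from s
  have noDesc : ∀ p, p + 2 ≤ m → p ≠ s → K p → K (p+1) := by
    intro p h2 hps hK
    by_contra hK1
    rcases Nat.lt_or_ge p s with h | h
    · exact hB (p+1) (by omega) (by omega) hK1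
        (by rw [show p+1+s = p+s+1 from by omega]; exact hA p h hK)
    · have h' : s+1 ≤ p := by omega
      exact hC p h' (by omega) hK
        (by rw [show p+s+1 = p+1+s from by omega]; exact hD (p+1) (by omega) (by omega) hK1)
  -- monotone segment lemma
  have seg : ∀ a, K a → ∀ b, a ≤ b → b < m → (∀ t, a ≤ t → t < b → t ≠ s) → K b := by
    intro a hKa b
    induction b with
    | zero => intro hab _ _; rwa [Nat.le_zero.mp hab] at hKa
    | succ n ih =>
      intro hab hbm hns
      rcases Nat.eq_or_lt_of_le hab with he | hlt
      · rwa [← he]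
      · have hn : K n := ih (by omega) (by omega) (fun t h1 h2 => hns t h1 (by omega))
        exact noDesc n (by omega) (hns n (by omega) (by omega)) hn
  by_cases hK0 : K 0
  · -- case K 0 : K is identically true on [0, m-1], no wall anywhere
    have hlow : ∀ t, t ≤ s → K t := by
      intro t ht
      exact seg 0 hK0 t (by omega) (by omega) (fun t' h1 h2 => by omega)
    have hs1' : K (s+1) := by
      have := hA 0 (by omega) hK0
      simpa using this
    have hhigh : ∀ t, s+1 ≤ t → t < m → K t := by
      intro t h1 h2
      exact seg (s+1) hs1' t h1 h2 (fun t' h1' h2' => by omega)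
    have hKt : ∀ t, t < m → K t := by
      intro t ht
      rcases Nat.lt_or_ge t (s+1) with h | h
      · exact hlow t (by omega)
      · exact hhigh t h ht
    exact hwall (iff_of_true (hKt r0 (by omega)) (hKt (r0+1) (by omega)))
  · -- case ¬ K 0
    have hE' := hE hK0
    have hKs1 : K (s+1) := by
      by_contra hns1
      exact hE' (by
        have := hD (s+1) le_rfl (by omega) hns1
        rwa [show s+1+s = 2*s+1 from by omega] at this)
    have hupper : ∀ t, s+1 ≤ t → t < m → K t := by
      intro t h1 h2
      exact seg (s+1) hKs1 t h1 h2 (fun t' h1' h2' => by omega)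
    -- least element where K holds
    have hex : ∃ t, K t := ⟨s, hS⟩
    set a := Nat.find hex with ha
    have hKa : K a := Nat.find_spec hex
    have hamin : ∀ t, t < a → ¬ K t := fun t ht => Nat.find_min hex ht
    have has : a ≤ s := Nat.find_min' hex hS
    have hapos : 1 ≤ a := by
      rcases Nat.eq_zero_or_pos a with h | h
      · exact absurd (h ▸ hKa) hK0
      · exact h
    have hhigh : ∀ t, a ≤ t → t < m → K t := by
      intro t h1 h2
      rcases Nat.lt_or_ge t (s+1) with h | h
      · exact seg a hKa t h1 h2 (fun t' h1' h2' => by omega)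
      · exact hupper t h h2
    -- 2s+1 > m
    have h2sm : m + 1 ≤ 2*s + 1 := by
      by_contra h'
      push_neg at h'
      rcases Nat.lt_or_ge (2*s+1) m with hc | hc
      · exact hE' (hhigh (2*s+1) (by omega) hc)
      · have hm2s : 2*s+1 = m := by omega
        have := (hanti 0).mpr hK0
        rw [show 0 + m = 2*s+1 from by omega] at this
        exact hE' this
    -- K (2s+1-m)
    have ht0 : K (2*s+1-m) := by
      by_contra hn
      have := (hanti (2*s+1-m)).mpr hn
      rw [show 2*s+1-m+m = 2*s+1 from by omega] at this
      exact hE' this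
    have hat0 : a ≤ 2*s+1-m := Nat.find_min' hex ht0
    -- K (2s) via hA at s-1
    have hK2s : K (2*s) := by
      have hs_1 : K (s-1) := hhigh (s-1) (by omega) (by omega)
      have := hA (s-1) (by omega) hs_1
      rwa [show s-1+s+1 = 2*s from by omega] at this
    have hn2sm : ¬ K (2*s-m) := by
      intro hc
      have := (hanti (2*s-m)).mp (by rwa [show 2*s-m+m = 2*s from by omega])
      exact this hc
    have hlt2sm : 2*s-m < a := by
      by_contra h'
      push_neg at h'
      exact hn2sm (hhigh _ h' (by omega))
    -- hence a = 2s+1-m; wall forces r0 + 1 = a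
    have hae : a = 2*s+1-m := by omega
    have hv1 : K r0 ↔ a ≤ r0 := by
      constructor
      · intro h; by_contra h'; exact hamin r0 (by omega) h
      · intro h; exact hhigh r0 h (by omega)
    have hv2 : K (r0+1) ↔ a ≤ r0+1 := by
      constructor
      · intro h; by_contra h'; exact hamin (r0+1) (by omega) h
      · intro h; exact hhigh (r0+1) h (by omega)
    have : a ≠ r0 + 1 := by omega
    exact hwall (by rw [hv1, hv2]; constructor <;> intro <;> omega)

end WT8

namespace WT8
variable {m : ℕ}

lemma cast_add2m (a : ℕ) : ((a + 2*m : ℕ) : ZMod (2*m)) = (a : ZMod (2*m)) := by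
  rw [Nat.cast_add, cast2m_eq_zero, add_zero]

lemma main_witness (hm : 0 < m) (u : Fin m → ZMod 2) (p q : ZMod (2*m)) (σ r0 : ℕ)
    (hσ1 : 1 ≤ σ) (hσ2 : σ + 2 ≤ m)
    (hq : q = p + ((2*σ+1 : ℕ) : ZMod (2*m)))
    (harc : ¬ P hm u (p + ((σ:ℕ) : ZMod (2*m))))
    (hr0 : r0 + 2 ≤ m) (hr0s : r0 ≠ σ) (hr0e : r0 + m ≠ 2*σ)
    (hwall : ¬ (P hm u (p + ((r0:ℕ) : ZMod (2*m))) ↔ P hm u (p + ((r0+1:ℕ) : ZMod (2*m))))) :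
    ∃ z : WVert m, z ≠ some p ∧ z ≠ some q ∧ warc m u (some p) z ∧ warc m u z (some q) := by
  by_contra hno
  push_neg at hno
  set K : ℕ → Prop := fun t => ¬ P hm u (p + ((t:ℕ) : ZMod (2*m))) with hK
  have hanti : ∀ t, K (t+m) ↔ ¬ K t := by
    intro t
    simp only [hK]
    rw [P_add_m hm u p t]
  have hA : ∀ r, r < σ → K r → K (r+σ+1) := by
    intro r hr hKr hKc
    simp only [hK, not_not] at hKr hKc
    refine hno (some (p + ((2*r+1 : ℕ) : ZMod (2*m)))) ?_ ?_ ?_ ?_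
    · intro hc
      rcases self_eq_add_cast hm (by omega) (Option.some_inj.mp hc).symm with h | h <;> omega
    · rw [hq]
      intro hc
      rcases cast_cancel hm (by omega) (by omega) (Option.some_inj.mp hc) with h | h | h <;>
        omega
    · exact (warc_odd_out hm u p (by omega)).mpr hKr
    · have hqz : q = (p + ((2*r+1 : ℕ) : ZMod (2*m))) + ((2*(σ-r) : ℕ) : ZMod (2*m)) := by
        rw [hq, addc, show 2*r+1+2*(σ-r) = 2*σ+1 from by omega]
      rw [hqz]
      refine (warc_even_out hm u _ (by omega) (by omega)).mpr ?_
      rw [addc, show 2*r+1+(σ-r) = r+σ+1 from by omega]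
      exact hKc
  have hB : ∀ r, 1 ≤ r → r ≤ σ → ¬ K r → ¬ K (r+σ) := by
    intro r hr1 hr hKr hKc
    simp only [hK, not_not] at hKr hKc
    refine hno (some (p + ((2*r : ℕ) : ZMod (2*m)))) ?_ ?_ ?_ ?_
    · intro hc
      rcases self_eq_add_cast hm (by omega) (Option.some_inj.mp hc).symm with h | h <;> omega
    · rw [hq]
      intro hc
      rcases cast_cancel hm (by omega) (by omega) (Option.some_inj.mp hc) with h | h | h <;>
        omega
    · exact (warc_even_out hm u p hr1 (by omega)).mpr hKr
    · have hqz : q = (p + ((2*r : ℕ) : ZMod (2*m))) + ((2*(σ-r)+1 : ℕ) : ZMod (2*m)) := by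
        rw [hq, addc, show 2*r+(2*(σ-r)+1) = 2*σ+1 from by omega]
      rw [hqz]
      refine (warc_odd_out hm u _ (by omega)).mpr ?_
      rw [addc, show 2*r+(σ-r) = r+σ from by omega]
      exact hKc
  have hC : ∀ r, σ+1 ≤ r → r < m → K r → ¬ K (r+σ+1) := by
    intro r hr1 hr hKr hKc
    simp only [hK, not_not] at hKr hKc
    refine hno (some (p + ((2*r+1 : ℕ) : ZMod (2*m)))) ?_ ?_ ?_ ?_
    · intro hc
      rcases self_eq_add_cast hm (by omega) (Option.some_inj.mp hc).symm with h | h <;> omega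
    · rw [hq]
      intro hc
      rcases cast_cancel hm (by omega) (by omega) (Option.some_inj.mp hc) with h | h | h <;>
        omega
    · exact (warc_odd_out hm u p (by omega)).mpr hKr
    · have hqz : q = (p + ((2*r+1 : ℕ) : ZMod (2*m))) + ((2*(m+σ-r) : ℕ) : ZMod (2*m)) := by
        rw [hq, addc, show 2*r+1+2*(m+σ-r) = (2*σ+1) + 2*m from by omega, cast_add2m]
      rw [hqz]
      refine (warc_even_out hm u _ (by omega) (by omega)).mpr ?_
      rw [addc, show 2*r+1+(m+σ-r) = (r+σ+1)+m from by omega, P_add_m hm u]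
      exact hKc
  have hD : ∀ r, σ+1 ≤ r → r < m → ¬ K r → K (r+σ) := by
    intro r hr1 hr hKr
    simp only [hK, not_not] at hKr ⊢
    intro hKc
    refine hno (some (p + ((2*r : ℕ) : ZMod (2*m)))) ?_ ?_ ?_ ?_
    · intro hc
      rcases self_eq_add_cast hm (by omega) (Option.some_inj.mp hc).symm with h | h <;> omega
    · rw [hq]
      intro hc
      rcases cast_cancel hm (by omega) (by omega) (Option.some_inj.mp hc) with h | h | h <;>
        omega
    · exact (warc_even_out hm u p (by omega) (by omega)).mpr hKr
    · have hqz : q = (p + ((2*r : ℕ) : ZMod (2*m))) + ((2*(m+σ-r)+1 : ℕ) : ZMod (2*m)) := by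
        rw [hq, addc, show 2*r+(2*(m+σ-r)+1) = (2*σ+1) + 2*m from by omega, cast_add2m]
      rw [hqz]
      refine (warc_odd_out hm u _ (by omega)).mpr ?_
      rw [addc, show 2*r+(m+σ-r) = (r+σ)+m from by omega, P_add_m hm u]
      exact fun hcon => hcon hKc
  have hE : ¬ K 0 → ¬ K (2*σ+1) := by
    intro hK0 hKc
    simp only [hK, not_not] at hK0 hKc
    refine hno none (by simp) (by simp) ?_ ?_
    · rw [warc_some_none hm u]
      simpa using hK0
    · rw [warc_none_some hm u, hq]
      exact hKc
  have hS : K σ := harc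
  have hwallK : ¬ (K r0 ↔ K (r0+1)) := by
    simp only [hK]
    tauto
  exact core m σ r0 K hσ1 hσ2 hS hA hB hC hD hE hanti hr0 hr0s hr0e hwallK

end WT8


open WT8 in
/-- Let `a` be the arc of `W_u` between `i` and `j`, where `i` and `j`
have opposite parity and are not consecutive. If `ℓ, ℓ+1 ∉ {i, j}` and `ℓ` and
`ℓ+1` are both in-neighbours or both out-neighbours of `i`, then either
`d(a) > 1` or `ℓ = 2j − i − 1`. -/
theorem walecki_stmt8 (m : ℕ) (hm : 1 ≤ m) (u : Fin m → ZMod 2)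
    (i j ℓ : ZMod (2 * m))
    (hpar : ¬ sameParity m i j)
    (hcons : j ≠ i - 1 ∧ j ≠ i + 1)
    (x y : WVert m)
    (hxy : (x = some i ∧ y = some j) ∨ (x = some j ∧ y = some i))
    (ha : warc m u x y)
    (hl : ℓ ≠ i ∧ ℓ ≠ j) (hl1 : ℓ + 1 ≠ i ∧ ℓ + 1 ≠ j)
    (hnbr : (warc m u (some ℓ) (some i) ∧ warc m u (some (ℓ + 1)) (some i)) ∨
            (warc m u (some i) (some ℓ) ∧ warc m u (some i) (some (ℓ + 1)))) :
    1 < dcount (warc m u) x y ∨ ℓ = 2 * j - i - 1 := by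
  have hm0 : 0 < m := hm
  haveI : NeZero (2*m) := ⟨by omega⟩
  -- j = i + (2s+1) with 1 ≤ s ≤ m-2
  have hij : i ≠ j := by
    intro h
    exact hpar ⟨0, by rw [h]; ring⟩
  obtain ⟨s, ⟨hs, hjeq⟩ | ⟨hs1, hs, hjeq⟩⟩ := decomp hm0 (Ne.symm hij)
  swap
  · -- even difference: contradicts hpar
    exfalso
    apply hpar
    refine ⟨-((s:ℕ) : ZMod (2*m)), ?_⟩
    rw [hjeq]
    push_cast
    ring
  have hs1 : 1 ≤ s := by
    rcases Nat.eq_zero_or_pos s with h0 | h0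
    · exfalso
      apply hcons.2
      rw [hjeq, h0]
      norm_num
    · exact h0
  have hs2 : s + 2 ≤ m := by
    rcases Nat.lt_or_ge s (m-1) with h0 | h0
    · omega
    · exfalso
      apply hcons.1
      have hsm : s = m - 1 := by omega
      rw [hjeq, hsm, show (2*(m-1)+1 : ℕ) = 2*m - 1 from by omega]
      rw [show ((2*m-1 : ℕ) : ZMod (2*m)) = ((2*m : ℕ) : ZMod (2*m)) - ((1:ℕ) : ZMod (2*m))
        from by rw [← Nat.cast_sub (by omega)], cast2m_eq_zero]
      push_cast
      ring
  -- ℓ = i + (2 r0 + 1) with wall at r0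
  have hlni : ℓ ≠ i := hl.1
  obtain ⟨r0, ⟨hr0m, hleq⟩ | ⟨hr01, hr0m, hleq⟩⟩ := decomp hm0 hlni
  swap
  · -- even offset: hnbr impossible
    exfalso
    have hl1eq : ℓ + 1 = i + ((2*r0+1 : ℕ) : ZMod (2*m)) := by
      rw [hleq]; push_cast; ring
    rcases hnbr with ⟨h1, h2⟩ | ⟨h1, h2⟩
    · rw [hleq, warc_even_in hm0 u i hr01 hr0m] at h1
      rw [hl1eq, warc_odd_in hm0 u i hr0m] at h2
      exact h1 h2
    · rw [hleq, warc_even_out hm0 u i hr01 hr0m] at h1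
      rw [hl1eq, warc_odd_out hm0 u i hr0m] at h2
      exact h2 h1
  have hl1eq : ℓ + 1 = i + ((2*(r0+1) : ℕ) : ZMod (2*m)) := by
    rw [hleq]; push_cast; ring
  have hr0top : r0 ≠ m - 1 := by
    intro hc
    apply hl1.1
    rw [hl1eq, hc, show (2*(m-1+1) : ℕ) = 2*m from by omega, cast2m_eq_zero, add_zero]
  have hr0s : r0 ≠ s := by
    intro hc
    apply hl.2
    rw [hleq, hc, ← hjeq]
  have hr02 : r0 + 2 ≤ m := by omega
  -- the wall
  have hwall : ¬ (P hm0 u (i + ((r0:ℕ) : ZMod (2*m))) ↔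
      P hm0 u (i + ((r0+1:ℕ) : ZMod (2*m)))) := by
    have he2 : 1 ≤ r0+1 := by omega
    have hm2 : r0+1 < m := by omega
    rcases hnbr with ⟨h1, h2⟩ | ⟨h1, h2⟩
    · rw [hleq, warc_odd_in hm0 u i hr0m] at h1
      rw [hl1eq, warc_even_in hm0 u i he2 hm2] at h2
      intro hiff
      exact h2 (hiff.mp h1)
    · rw [hleq, warc_odd_out hm0 u i hr0m] at h1
      rw [hl1eq, warc_even_out hm0 u i he2 hm2] at h2
      intro hiff
      exact h1 (hiff.mpr h2)
  by_cases hfin : ℓ = 2 * j - i - 1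
  · exact Or.inr hfin
  left
  -- the exceptional positions are excluded
  have h2ji : 2 * j - i - 1 = i + ((4*s+1 : ℕ) : ZMod (2*m)) := by
    rw [hjeq]
    push_cast
    ring
  have hr0ne2s : r0 ≠ 2*s := by
    intro hc
    apply hfin
    rw [hleq, h2ji, hc, show (2*(2*s)+1 : ℕ) = 4*s+1 from by ring]
  have hr0ne2sm : r0 + m ≠ 2*s := by
    intro hc
    apply hfin
    rw [hleq, h2ji, show (4*s+1 : ℕ) = 2*r0+1 + 2*m from by omega, cast_add2m]
  -- positivity of bcount via the main witness, then the identity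
  rcases hxy with ⟨hx, hy⟩ | ⟨hx, hy⟩
  · -- x = i, y = j
    subst hx hy
    have harc : ¬ P hm0 u (i + ((s:ℕ) : ZMod (2*m))) := by
      rw [hjeq, warc_odd_out hm0 u i (by omega)] at ha
      exact ha
    obtain ⟨z, hz1, hz2, hz3, hz4⟩ :=
      main_witness hm0 u i j s r0 hs1 hs2 hjeq harc hr02 hr0s hr0ne2sm hwall
    have hbpos : 0 < bcount (warc m u) (some i) (some j) := by
      rw [bcount]
      rw [Set.ncard_pos (Set.toFinite _)]
      exact ⟨z, hz1, hz2, hz3, hz4⟩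
    have hid := d_eq_b_succ hm0 u i j hij ha
    omega
  · -- x = j, y = i
    subst hx hy
    set σ' : ℕ := m - 1 - s with hσ'
    have hσ'1 : 1 ≤ σ' := by omega
    have hσ'2 : σ' + 2 ≤ m := by omega
    have hieq : i = j + ((2*σ'+1 : ℕ) : ZMod (2*m)) := by
      rw [hjeq, addc, show 2*s+1+(2*σ'+1) = 2*m from by omega, cast2m_eq_zero, add_zero]
    have harc : ¬ P hm0 u (j + ((σ':ℕ) : ZMod (2*m))) := by
      rw [hieq, warc_odd_out hm0 u j (by omega)] at ha
      exact ha
    have hji : j ≠ i := Ne.symm hij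
    -- transported wall position r0'
    have key : ∃ r0' : ℕ, r0' + 2 ≤ m ∧ r0' ≠ σ' ∧ r0' + m ≠ 2*σ' ∧
        ¬ (P hm0 u (j + ((r0':ℕ) : ZMod (2*m))) ↔
           P hm0 u (j + ((r0'+1:ℕ) : ZMod (2*m)))) := by
      have hshift : ∀ t : ℕ, j + ((t:ℕ) : ZMod (2*m)) = i + ((2*s+1+t : ℕ) : ZMod (2*m)) := by
        intro t
        rw [hjeq, addc]
      rcases Nat.lt_or_ge r0 (2*s+1) with hcase | hcase
      · rcases Nat.lt_or_ge (r0 + m) (2*s+1) with hcase2 | hcase2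
        · -- case A : r0' = r0 + 2m - 2s - 1
          refine ⟨r0 + 2*m - (2*s+1), by omega, by omega, by omega, ?_⟩
          rw [hshift, hshift, show 2*s+1+(r0 + 2*m - (2*s+1)) = r0 + 2*m from by omega,
            show 2*s+1+(r0 + 2*m - (2*s+1) + 1) = (r0+1) + 2*m from by omega,
            cast_add2m, cast_add2m]
          exact hwall
        · -- case B : r0' = r0 + m - 2s - 1
          refine ⟨r0 + m - (2*s+1), by omega, by omega, by omega, ?_⟩
          rw [hshift, hshift, show 2*s+1+(r0 + m - (2*s+1)) = r0 + m from by omega,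
            show 2*s+1+(r0 + m - (2*s+1) + 1) = (r0+1) + m from by omega,
            P_add_m hm0 u, P_add_m hm0 u]
          intro hiff
          exact hwall (by tauto)
      · -- case C : r0' = r0 - 2s - 1
        refine ⟨r0 - (2*s+1), by omega, by omega, by omega, ?_⟩
        rw [hshift, hshift, show 2*s+1+(r0 - (2*s+1)) = r0 from by omega,
          show 2*s+1+(r0 - (2*s+1) + 1) = r0+1 from by omega]
        exact hwall
    obtain ⟨r0', hb1, hb2, hb3, hwall'⟩ := key
    obtain ⟨z, hz1, hz2, hz3, hz4⟩ :=
      main_witness hm0 u j i σ' r0' hσ'1 hσ'2 hieq harc hb1 hb2 hb3 hwall'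
    have hbpos : 0 < bcount (warc m u) (some j) (some i) := by
      rw [bcount]
      rw [Set.ncard_pos (Set.toFinite _)]
      exact ⟨z, hz1, hz2, hz3, hz4⟩
    have hid := d_eq_b_succ hm0 u j i hji ha
    omega
end

section
/- Let W_u be a Walecki tournament. Suppose 3 divides 2m+1, the integer (2m+1)/3 is odd, and i, j, ℓ ∈ ZMod n satisfy j = i + (2m+1)/3 (the integer (2m+1)/3 reduced mod n) and ℓ = 2j − i − 1. Let a be the arc of W_u between i and j. If i, j, and ℓ induce a directed triangle in W_u, then d(a) > 1. -/
lemma cast_nat_inj {m : ℕ} {a b : ℕ} (ha : a < 2*m) (hb : b < 2*m)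
    (h : ((a:ℕ) : ZMod (2*m)) = ((b:ℕ) : ZMod (2*m))) : a = b := by
  rwa [ZMod.natCast_eq_natCast_iff', Nat.mod_eq_of_lt ha, Nat.mod_eq_of_lt hb] at h

lemma odd_not_zero {m : ℕ} (hm : 1 ≤ m) {c : ℕ} (hc : c % 2 = 1)
    (h : ((c:ℕ) : ZMod (2*m)) = 0) : False := by
  rw [ZMod.natCast_eq_zero_iff] at h
  have h2 : 2 ∣ c := dvd_trans ⟨m, rfl⟩ h
  omega

lemma dvd_bound {m : ℕ} (hm : 1 ≤ m) {x : ℕ} (h : 2*m ∣ 2*x) (h1 : 1 ≤ x) (h2 : x < 2*m) :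
    x = m := by
  obtain ⟨c, hc⟩ := h
  have h0 : c ≠ 0 := by rintro rfl; omega
  have h2' : c < 2 := by
    by_contra hge
    push_neg at hge
    have hle : 2*m*2 ≤ 2*m*c := Nat.mul_le_mul_left (2*m) hge
    omega
  have hc1 : c = 1 := by omega
  subst hc1
  omega

def Psig (m : ℕ) (u : Fin m → ZMod 2) (w : ZMod (2*m)) : Prop :=
  (∃ f : Fin m, ((f : ℕ) : ZMod (2*m)) = w ∧ u f = 1) ∨
  (∃ f : Fin m, ((f : ℕ) : ZMod (2*m)) = w + ((m:ℕ) : ZMod (2*m)) ∧ u f = 0)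

lemma fin_cast_clash {m : ℕ} (f g : Fin m)
    (h : ((f:ℕ) : ZMod (2*m)) = ((g:ℕ) : ZMod (2*m)) + ((m:ℕ) : ZMod (2*m))) : False := by
  have h' : ((f:ℕ) : ZMod (2*m)) = (((g:ℕ) + m : ℕ) : ZMod (2*m)) := by push_cast; exact h
  have hf := f.isLt; have hg := g.isLt
  have := cast_nat_inj (by omega) (by omega) h'
  omega

lemma fin_cast_inj {m : ℕ} (f g : Fin m)
    (h : ((f:ℕ) : ZMod (2*m)) = ((g:ℕ) : ZMod (2*m))) : f = g := by
  have hf := f.isLt; have hg := g.isLt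
  exact Fin.ext (cast_nat_inj (by omega) (by omega) h)

lemma Pnotboth {m : ℕ} (u : Fin m → ZMod 2) (w : ZMod (2*m)) :
    ¬ (Psig m u w ∧ Psig m u (w + ((m:ℕ) : ZMod (2*m)))) := by
  have hmm : (w + ((m:ℕ) : ZMod (2*m))) + ((m:ℕ) : ZMod (2*m)) = w := by
    have h0 : ((2*m : ℕ) : ZMod (2*m)) = 0 := ZMod.natCast_self _
    push_cast at h0
    linear_combination h0
  rintro ⟨hP, hQ⟩
  rcases hP with ⟨f, hf, hf1⟩ | ⟨f, hf, hf0⟩ <;>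
    rcases hQ with ⟨g, hg, hg1⟩ | ⟨g, hg, hg0⟩
  · exact fin_cast_clash g f (by rw [hg, hf])
  · rw [hmm] at hg
    have := fin_cast_inj f g (by rw [hf, hg])
    subst this
    rw [hf1] at hg0
    exact one_ne_zero hg0
  · have := fin_cast_inj f g (by rw [hf, hg])
    subst this
    rw [hg1] at hf0
    exact one_ne_zero hf0
  · rw [hmm] at hg
    exact fin_cast_clash f g (by rw [hf, hg])

lemma warc_odd {m : ℕ} (hm : 1 ≤ m) (u : Fin m → ZMod 2) (t : ℕ) (ht : t ≤ m - 1)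
    (a b : ZMod (2*m)) (hab : b = a + ((2*t+1 : ℕ) : ZMod (2*m))) :
    warc m u (some a) (some b) ↔ Psig m u (a + ((t:ℕ) : ZMod (2*m))) := by
  have h2m : ((2*m : ℕ) : ZMod (2*m)) = 0 := ZMod.natCast_self _
  push_cast at h2m hab
  constructor
  · rintro ⟨f, ⟨hu, hC⟩ | ⟨hu, hC⟩⟩
    · rcases hC with ⟨hx, hy⟩ | ⟨hx, hy⟩ | ⟨k, hk, hx, hy⟩ | ⟨k, hk1, hk, hx, hy⟩
      · simp at hx
      · simp at hy
      · rw [Option.some.injEq] at hx hy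
        have hkt : ((2*k : ℕ) : ZMod (2*m)) = ((2*t : ℕ) : ZMod (2*m)) := by
          push_cast
          linear_combination hx + hab - hy
        have hk2 : k = t := by
          have := cast_nat_inj (m := m) (by omega) (by omega) hkt
          omega
        subst hk2
        refine Or.inl ⟨f, ?_, hu⟩
        linear_combination -hx
      · rw [Option.some.injEq] at hx hy
        exfalso
        refine odd_not_zero hm (c := 2*k + 2*t + 1) (by omega) ?_
        push_cast
        linear_combination hy - hab - hx
    · rcases hC with ⟨hx, hy⟩ | ⟨hx, hy⟩ | ⟨k, hk, hx, hy⟩ | ⟨k, hk1, hk, hx, hy⟩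
      · simp at hx
      · simp at hy
      · rw [Option.some.injEq] at hx hy
        have hz : ((2*k + 2*t + 2 : ℕ) : ZMod (2*m)) = 0 := by
          push_cast
          linear_combination hx - hab - hy
        rw [ZMod.natCast_eq_zero_iff] at hz
        have hz' : 2*m ∣ 2*(k+t+1) := by
          rwa [show 2*k+2*t+2 = 2*(k+t+1) from by ring] at hz
        have hktm : k + t + 1 = m := dvd_bound hm hz' (by omega) (by omega)
        refine Or.inr ⟨f, ?_, hu⟩
        have hc : ((k:ℕ) : ZMod (2*m)) + ((t:ℕ) : ZMod (2*m)) + 1 = ((m:ℕ) : ZMod (2*m)) := by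
          exact_mod_cast congrArg (fun x : ℕ => ((x:ℕ) : ZMod (2*m))) hktm
        linear_combination -hx + hab + hc
      · rw [Option.some.injEq] at hx hy
        exfalso
        have hkt : ((2*k : ℕ) : ZMod (2*m)) = ((2*t+1 : ℕ) : ZMod (2*m)) := by
          push_cast
          linear_combination hab + hy - hx
        have := cast_nat_inj (m := m) (by omega) (by omega) hkt
        omega
  · rintro (⟨f, hf, hu⟩ | ⟨f, hf, hu⟩)
    · refine ⟨f, Or.inl ⟨hu, Or.inr (Or.inr (Or.inl ⟨t, ht, ?_, ?_⟩))⟩⟩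
      · exact congrArg some (by linear_combination -hf)
      · exact congrArg some (by linear_combination hab - hf)
    · refine ⟨f, Or.inr ⟨hu, Or.inr (Or.inr (Or.inl ⟨m - 1 - t, by omega, ?_, ?_⟩))⟩⟩
      · have hc : ((m - 1 - t : ℕ) : ZMod (2*m)) + ((t:ℕ) : ZMod (2*m)) + 1
            = ((m:ℕ) : ZMod (2*m)) := by
          exact_mod_cast congrArg (fun x : ℕ => ((x:ℕ) : ZMod (2*m)))
            (show (m - 1 - t) + t + 1 = m by omega)
        exact congrArg some (by linear_combination hab - hf + hc)
      · have hc : ((m - 1 - t : ℕ) : ZMod (2*m)) + ((t:ℕ) : ZMod (2*m)) + 1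
            = ((m:ℕ) : ZMod (2*m)) := by
          exact_mod_cast congrArg (fun x : ℕ => ((x:ℕ) : ZMod (2*m)))
            (show (m - 1 - t) + t + 1 = m by omega)
        exact congrArg some (by linear_combination -hf - hc - h2m)

lemma warc_even {m : ℕ} (hm : 1 ≤ m) (u : Fin m → ZMod 2) (s : ℕ) (hs1 : 1 ≤ s)
    (hs : s ≤ m - 1) (a b : ZMod (2*m)) (hab : a = b + ((2*s : ℕ) : ZMod (2*m))) :
    warc m u (some a) (some b) ↔ Psig m u (a - ((s:ℕ) : ZMod (2*m))) := by
  have h2m : ((2*m : ℕ) : ZMod (2*m)) = 0 := ZMod.natCast_self _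
  push_cast at h2m hab
  constructor
  · rintro ⟨f, ⟨hu, hC⟩ | ⟨hu, hC⟩⟩
    · rcases hC with ⟨hx, hy⟩ | ⟨hx, hy⟩ | ⟨k, hk, hx, hy⟩ | ⟨k, hk1, hk, hx, hy⟩
      · simp at hx
      · simp at hy
      · rw [Option.some.injEq] at hx hy
        exfalso
        refine odd_not_zero hm (c := 2*k + 2*s + 1) (by omega) ?_
        push_cast
        linear_combination hx - hy - hab
      · rw [Option.some.injEq] at hx hy
        have hks : ((2*k : ℕ) : ZMod (2*m)) = ((2*s : ℕ) : ZMod (2*m)) := by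
          push_cast
          linear_combination hy + hab - hx
        have hk2 : k = s := by
          have := cast_nat_inj (m := m) (by omega) (by omega) hks
          omega
        subst hk2
        refine Or.inl ⟨f, ?_, hu⟩
        linear_combination -hx
    · rcases hC with ⟨hx, hy⟩ | ⟨hx, hy⟩ | ⟨k, hk, hx, hy⟩ | ⟨k, hk1, hk, hx, hy⟩
      · simp at hx
      · simp at hy
      · rw [Option.some.injEq] at hx hy
        exfalso
        have hks : ((2*k+1 : ℕ) : ZMod (2*m)) = ((2*s : ℕ) : ZMod (2*m)) := by
          push_cast
          linear_combination hab - hy + hx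
        have := cast_nat_inj (m := m) (by omega) (by omega) hks
        omega
      · rw [Option.some.injEq] at hx hy
        have hz : ((2*k + 2*s : ℕ) : ZMod (2*m)) = 0 := by
          push_cast
          linear_combination hy - hx - hab
        rw [ZMod.natCast_eq_zero_iff] at hz
        have hz' : 2*m ∣ 2*(k+s) := by
          rwa [show 2*k+2*s = 2*(k+s) from by ring] at hz
        have hksm : k + s = m := dvd_bound hm hz' (by omega) (by omega)
        refine Or.inr ⟨f, ?_, hu⟩
        have hc : ((k:ℕ) : ZMod (2*m)) + ((s:ℕ) : ZMod (2*m)) = ((m:ℕ) : ZMod (2*m)) := by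
          exact_mod_cast congrArg (fun x : ℕ => ((x:ℕ) : ZMod (2*m))) hksm
        linear_combination -hx - hab - hc - h2m
  · rintro (⟨f, hf, hu⟩ | ⟨f, hf, hu⟩)
    · refine ⟨f, Or.inl ⟨hu, Or.inr (Or.inr (Or.inr ⟨s, hs1, hs, ?_, ?_⟩))⟩⟩
      · exact congrArg some (by linear_combination -hf)
      · exact congrArg some (by linear_combination -hab - hf)
    · refine ⟨f, Or.inr ⟨hu, Or.inr (Or.inr (Or.inr ⟨m - s, by omega, by omega, ?_, ?_⟩))⟩⟩
      · have hc : ((m - s : ℕ) : ZMod (2*m)) + ((s:ℕ) : ZMod (2*m)) = ((m:ℕ) : ZMod (2*m)) := by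
          exact_mod_cast congrArg (fun x : ℕ => ((x:ℕ) : ZMod (2*m)))
            (show (m - s) + s = m by omega)
        exact congrArg some (by linear_combination -hab - hf - hc - h2m)
      · have hc : ((m - s : ℕ) : ZMod (2*m)) + ((s:ℕ) : ZMod (2*m)) = ((m:ℕ) : ZMod (2*m)) := by
          exact_mod_cast congrArg (fun x : ℕ => ((x:ℕ) : ZMod (2*m)))
            (show (m - s) + s = m by omega)
        exact congrArg some (by linear_combination -hf + hc)


/-- Suppose `3 ∣ 2m+1`, the integer `(2m+1)/3` is odd, `j = i + (2m+1)/3`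
and `ℓ = 2j − i − 1`. If `i`, `j`, `ℓ` induce a directed triangle in `W_u`, then the
arc `a` of `W_u` between `i` and `j` satisfies `d(a) > 1`. -/
theorem walecki_stmt11 (m : ℕ) (hm : 1 ≤ m) (u : Fin m → ZMod 2)
    (h3 : 3 ∣ 2 * m + 1) (hoddq : Odd ((2 * m + 1) / 3))
    (i j ℓ : ZMod (2 * m))
    (hj : j = i + (((2 * m + 1) / 3 : ℕ) : ZMod (2 * m)))
    (hl : ℓ = 2 * j - i - 1)
    (x y : WVert m)
    (hxy : (x = some i ∧ y = some j) ∨ (x = some j ∧ y = some i))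
    (ha : warc m u x y)
    (htri : dirTri (warc m u) (some i) (some j) (some ℓ)) :
    1 < dcount (warc m u) x y := by
  haveI : NeZero (2*m) := ⟨by omega⟩
  have hq3 : 3 * ((2*m+1)/3) = 2*m+1 := Nat.mul_div_cancel' h3
  obtain ⟨t, hht⟩ := hoddq
  obtain ⟨hij, hjl, hil, htri'⟩ := htri
  rcases Nat.eq_zero_or_pos t with rfl | ht1
  · -- q = 1, m = 1, then ℓ = j, contradiction
    have hq1 : (2*m+1)/3 = 1 := by omega
    have hlj : ℓ = j := by
      rw [hl, hj, hq1]
      push_cast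
      ring
    exact absurd (congrArg some hlj.symm) hjl
  have hm3 : m = 3*t + 1 := by omega
  -- basic cast facts
  have h62 : ((6*t+2 : ℕ) : ZMod (2*m)) = 0 := by
    rw [show 6*t+2 = 2*m from by omega]; exact ZMod.natCast_self _
  push_cast at h62
  have hmz : ((m : ℕ) : ZMod (2*m)) = 3*(t : ZMod (2*m)) + 1 := by
    rw [hm3]; push_cast; ring
  have hj2 : j = i + 2*(t : ZMod (2*m)) + 1 := by
    rw [hj, show (2*m+1)/3 = 2*t+1 from by omega]; push_cast; ring
  have hl2 : ℓ = i + 4*(t : ZMod (2*m)) + 1 := by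
    rw [hl, hj2]; push_cast; ring
  set z : ZMod (2*m) := i + ((2*t : ℕ) : ZMod (2*m)) with hz
  have hz2 : z = i + 2*(t : ZMod (2*m)) := by rw [hz]; push_cast; ring
  -- the eight arc characterizations
  have A1 : warc m u (some i) (some j) ↔ Psig m u (i + ((t:ℕ) : ZMod (2*m))) :=
    warc_odd hm u t (by omega) i j (by push_cast; linear_combination hj2)
  have A2 : warc m u (some z) (some i) ↔ Psig m u (i + ((t:ℕ) : ZMod (2*m))) := by
    have h := warc_even hm u t ht1 (by omega) z i hz
    rwa [show z - ((t:ℕ) : ZMod (2*m)) = i + ((t:ℕ) : ZMod (2*m)) from by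
      push_cast; linear_combination hz2] at h
  have A3 : warc m u (some j) (some i) ↔
      Psig m u ((i + ((t:ℕ) : ZMod (2*m))) + ((m:ℕ) : ZMod (2*m))) := by
    have h := warc_odd hm u (2*t) (by omega) j i
      (by push_cast; linear_combination -hj2 - h62)
    rwa [show j + ((2*t:ℕ) : ZMod (2*m)) =
        (i + ((t:ℕ) : ZMod (2*m))) + ((m:ℕ) : ZMod (2*m)) from by
      push_cast; linear_combination hj2 - hmz] at h
  have A4 : warc m u (some i) (some z) ↔
      Psig m u ((i + ((t:ℕ) : ZMod (2*m))) + ((m:ℕ) : ZMod (2*m))) := by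
    have h := warc_even hm u (2*t+1) (by omega) (by omega) i z
      (by push_cast; linear_combination -hz2 - h62)
    rwa [show i - ((2*t+1:ℕ) : ZMod (2*m)) =
        (i + ((t:ℕ) : ZMod (2*m))) + ((m:ℕ) : ZMod (2*m)) from by
      push_cast; linear_combination -hmz - h62] at h
  have A5 : warc m u (some i) (some ℓ) ↔ Psig m u (i + ((2*t:ℕ) : ZMod (2*m))) :=
    warc_odd hm u (2*t) (by omega) i ℓ (by push_cast; linear_combination hl2)
  have A6 : warc m u (some z) (some j) ↔ Psig m u (i + ((2*t:ℕ) : ZMod (2*m))) := by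
    have h := warc_odd hm u 0 (by omega) z j
      (by push_cast; linear_combination hj2 - hz2)
    rwa [show z + ((0:ℕ) : ZMod (2*m)) = i + ((2*t:ℕ) : ZMod (2*m)) from by
      push_cast; linear_combination hz2] at h
  have A7 : warc m u (some ℓ) (some i) ↔
      Psig m u ((i + ((2*t:ℕ) : ZMod (2*m))) + ((m:ℕ) : ZMod (2*m))) := by
    have h := warc_odd hm u t (by omega) ℓ i
      (by push_cast; linear_combination -hl2 - h62)
    rwa [show ℓ + ((t:ℕ) : ZMod (2*m)) =
        (i + ((2*t:ℕ) : ZMod (2*m))) + ((m:ℕ) : ZMod (2*m)) from by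
      push_cast; linear_combination hl2 - hmz] at h
  have A8 : warc m u (some j) (some z) ↔
      Psig m u ((i + ((2*t:ℕ) : ZMod (2*m))) + ((m:ℕ) : ZMod (2*m))) := by
    have h := warc_odd hm u (3*t) (by omega) j z
      (by push_cast; linear_combination hz2 - hj2 - h62)
    rwa [show j + ((3*t:ℕ) : ZMod (2*m)) =
        (i + ((2*t:ℕ) : ZMod (2*m))) + ((m:ℕ) : ZMod (2*m)) from by
      push_cast; linear_combination hj2 - hmz] at h
  -- nonzero cast helper and distinctness
  have hne0 : ∀ c : ℕ, 0 < c → c < 2*m → ((c:ℕ) : ZMod (2*m)) ≠ 0 := by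
    intro c h1 h2 hc
    rw [ZMod.natCast_eq_zero_iff] at hc
    have := Nat.le_of_dvd h1 hc
    omega
  have hzi : (some z : WVert m) ≠ some i := by
    simp only [ne_eq, Option.some.injEq]
    intro he
    exact hne0 (2*t) (by omega) (by omega) (by push_cast; linear_combination he - hz2)
  have hzj : (some z : WVert m) ≠ some j := by
    simp only [ne_eq, Option.some.injEq]
    intro he
    exact hne0 1 (by omega) (by omega)
      (by push_cast; linear_combination -hj2 + hz2 - he)
  have hlz : (some ℓ : WVert m) ≠ some z := by
    simp only [ne_eq, Option.some.injEq]
    intro he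
    exact hne0 (2*t+1) (by omega) (by omega)
      (by push_cast; linear_combination -hl2 + he + hz2)
  rcases hxy with ⟨rfl, rfl⟩ | ⟨rfl, rfl⟩
  · -- x = some i, y = some j
    have hA : Psig m u (i + ((t:ℕ) : ZMod (2*m))) := A1.mp ha
    rcases htri' with ⟨t1, t2, t3⟩ | ⟨t1, t2, t3⟩
    · have hjz : warc m u (some j) (some z) := A8.mpr (A7.mp t3)
      have hzi' : warc m u (some z) (some i) := A2.mpr hA
      simp only [dcount]
      rw [Set.one_lt_ncard (Set.toFinite _)]
      exact ⟨some ℓ, ⟨hil.symm, hjl.symm, t2, t3⟩,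
        some z, ⟨hzi, hzj, hjz, hzi'⟩, hlz⟩
    · exact absurd ⟨hA, A3.mp t3⟩ (Pnotboth u _)
  · -- x = some j, y = some i
    have hA' : Psig m u ((i + ((t:ℕ) : ZMod (2*m))) + ((m:ℕ) : ZMod (2*m))) := A3.mp ha
    rcases htri' with ⟨t1, t2, t3⟩ | ⟨t1, t2, t3⟩
    · exact absurd ⟨A1.mp t1, hA'⟩ (Pnotboth u _)
    · have hiz : warc m u (some i) (some z) := A4.mpr hA'
      have hzj' : warc m u (some z) (some j) := A6.mpr (A5.mp t1)
      simp only [dcount]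
      rw [Set.one_lt_ncard (Set.toFinite _)]
      exact ⟨some ℓ, ⟨hjl.symm, hil.symm, t1, t2⟩,
        some z, ⟨hzj, hzi, hiz, hzj'⟩, hlz⟩
end

section
/- Let W_u be a Walecki tournament, let i ∈ ZMod n, let s be an even integer with 2 ≤ s ≤ m, and set j = i + s (so i and j have the same parity). Let a be the arc of W_u between i and j. If d(a) = 1, then the third vertex of the unique directed triangle containing a is *. -/
namespace WT

def vvB (m : ℕ) (u : Fin m → ZMod 2) (x : ZMod (2 * m)) : Bool :=
  if h : x.val < m then decide (u ⟨x.val, h⟩ = 1)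
  else if h2 : x.val - m < m then decide (u ⟨x.val - m, h2⟩ = 0)
  else false

lemma castInj {m : ℕ} (hm : 1 ≤ m) {c d : ℕ} (hc : c < 2 * m) (hd : d < 2 * m)
    (h : (c : ZMod (2 * m)) = d) : c = d := by
  rw [← ZMod.val_cast_of_lt hc, ← ZMod.val_cast_of_lt hd, h]

lemma castZero {m : ℕ} {c : ℕ} (h : (c : ZMod (2 * m)) = 0) : 2 * m ∣ c :=
  (ZMod.natCast_eq_zero_iff c (2 * m)).mp h

lemma mycast {m : ℕ} (hm : 1 ≤ m) (x : ZMod (2 * m)) : ((x.val : ℕ) : ZMod (2 * m)) = x := by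
  haveI : NeZero (2 * m) := ⟨by omega⟩
  exact ZMod.natCast_zmod_val x

lemma val_lt {m : ℕ} (hm : 1 ≤ m) (x : ZMod (2 * m)) : x.val < 2 * m := by
  haveI : NeZero (2 * m) := ⟨by omega⟩
  exact ZMod.val_lt x

lemma val_addm_lt {m : ℕ} (hm : 1 ≤ m) {p : ZMod (2 * m)} (h : p.val < m) :
    (p + ((m : ℕ) : ZMod (2 * m))).val = p.val + m := by
  haveI : NeZero (2 * m) := ⟨by omega⟩
  rw [ZMod.val_add, ZMod.val_cast_of_lt (by omega : m < 2 * m), Nat.mod_eq_of_lt (by omega)]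

lemma val_addm_ge {m : ℕ} (hm : 1 ≤ m) {p : ZMod (2 * m)} (h : m ≤ p.val) :
    (p + ((m : ℕ) : ZMod (2 * m))).val = p.val - m := by
  haveI : NeZero (2 * m) := ⟨by omega⟩
  have h2 := val_lt hm p
  rw [ZMod.val_add, ZMod.val_cast_of_lt (by omega : m < 2 * m)]
  have h3 : p.val + m = 2 * m + (p.val - m) := by omega
  rw [h3, Nat.add_mod_left, Nat.mod_eq_of_lt (by omega)]

lemma cast2m {m : ℕ} : ((2 * m : ℕ) : ZMod (2 * m)) = 0 := ZMod.natCast_self _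

lemma vv_flip {m : ℕ} (hm : 1 ≤ m) (u : Fin m → ZMod 2) (p : ZMod (2 * m)) :
    vvB m u (p + ((m : ℕ) : ZMod (2 * m))) = ! vvB m u p := by
  have hd : ∀ x : ZMod 2, decide (x = 0) = ! decide (x = 1) := by decide
  have hd' : ∀ x : ZMod 2, decide (x = 1) = ! decide (x = 0) := by decide
  by_cases h : p.val < m
  · have hv := val_addm_lt hm h
    rw [vvB, vvB, dif_neg (by omega), dif_pos (by omega : (p + ((m:ℕ):ZMod (2*m))).val - m < m),
      dif_pos h]
    have he : (p + ((m:ℕ):ZMod (2*m))).val - m = p.val := by omega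
    rw [hd]
    simp only [he]
  · have h2 := val_lt hm p
    have hv := val_addm_ge hm (by omega : m ≤ p.val)
    rw [vvB, vvB, dif_pos (by omega : (p + ((m:ℕ):ZMod (2*m))).val < m), dif_neg h,
      dif_pos (by omega : p.val - m < m)]
    rw [hd']
    simp only [hv]

end WT

namespace WT

/-- canonical form of finite Cplus arcs -/
lemma cplus_fin_iff {m : ℕ} (hm : 1 ≤ m) (j a b : ZMod (2 * m)) :
    Cplus m j (some a) (some b) ↔
      (∃ k : ℕ, k < m ∧ b = a + ((2 * k + 1 : ℕ) : ZMod (2 * m)) ∧ j = a + ((k : ℕ) : ZMod (2 * m))) ∨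
      (∃ k : ℕ, 1 ≤ k ∧ k < m ∧ a = b + ((2 * k : ℕ) : ZMod (2 * m)) ∧ j = a - ((k : ℕ) : ZMod (2 * m))) := by
  constructor
  · rintro (⟨h, -⟩ | ⟨-, h⟩ | ⟨k, hk, ha, hb⟩ | ⟨k, hk1, hk2, ha, hb⟩)
    · exact absurd h (by simp)
    · exact absurd h (by simp)
    · left
      refine ⟨k, by omega, ?_, ?_⟩
      · rw [Option.some_inj] at ha hb
        rw [hb, ha]; push_cast; ring
      · rw [Option.some_inj] at ha
        rw [ha]; push_cast; ring
    · right
      refine ⟨k, hk1, by omega, ?_, ?_⟩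
      · rw [Option.some_inj] at ha hb
        rw [hb, ha]; push_cast; ring
      · rw [Option.some_inj] at ha
        rw [ha]; push_cast; ring
  · rintro (⟨k, hk, hb, hj⟩ | ⟨k, hk1, hk2, ha, hj⟩)
    · refine Or.inr (Or.inr (Or.inl ⟨k, by omega, ?_, ?_⟩))
      · rw [Option.some_inj, hj]; push_cast; ring
      · rw [Option.some_inj, hj, hb]; push_cast; ring
    · refine Or.inr (Or.inr (Or.inr ⟨k, hk1, by omega, ?_, ?_⟩))
      · rw [Option.some_inj, hj, ha]; push_cast; ring
      · rw [Option.some_inj, hj, ha]; push_cast; ring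

lemma Cfacts_odd {m : ℕ} (hm : 1 ≤ m) (a : ZMod (2 * m)) (k : ℕ) (hk : k < m) :
    Cplus m (a + ((k : ℕ) : ZMod (2 * m))) (some a) (some (a + ((2 * k + 1 : ℕ) : ZMod (2 * m)))) ∧
    Cplus m (a + ((k : ℕ) : ZMod (2 * m)) + ((m : ℕ) : ZMod (2 * m)))
      (some (a + ((2 * k + 1 : ℕ) : ZMod (2 * m)))) (some a) := by
  constructor
  · exact (cplus_fin_iff hm _ _ _).mpr (Or.inl ⟨k, hk, rfl, rfl⟩)
  · refine (cplus_fin_iff hm _ _ _).mpr (Or.inl ⟨m - k - 1, by omega, ?_, ?_⟩)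
    · have h1 : (2 * k + 1) + (2 * (m - k - 1) + 1) = 2 * m := by omega
      have : ((2 * k + 1 : ℕ) : ZMod (2 * m)) + ((2 * (m - k - 1) + 1 : ℕ) : ZMod (2 * m)) = 0 := by
        rw [← Nat.cast_add, h1, cast2m]
      linear_combination -this
    · have h2 : ((2 * k + 1 : ℕ) : ZMod (2 * m)) + ((m - k - 1 : ℕ) : ZMod (2 * m)) =
          ((k : ℕ) : ZMod (2 * m)) + ((m : ℕ) : ZMod (2 * m)) := by
        rw [← Nat.cast_add, ← Nat.cast_add]; congr 1; omega
      linear_combination -h2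

lemma Cfacts_even {m : ℕ} (hm : 1 ≤ m) (a : ZMod (2 * m)) (k : ℕ) (hk1 : 1 ≤ k) (hk : k < m) :
    Cplus m (a - ((k : ℕ) : ZMod (2 * m))) (some a) (some (a - ((2 * k : ℕ) : ZMod (2 * m)))) ∧
    Cplus m (a - ((k : ℕ) : ZMod (2 * m)) + ((m : ℕ) : ZMod (2 * m)))
      (some (a - ((2 * k : ℕ) : ZMod (2 * m)))) (some a) := by
  constructor
  · refine (cplus_fin_iff hm _ _ _).mpr (Or.inr ⟨k, hk1, hk, by ring, rfl⟩)
  · refine (cplus_fin_iff hm _ _ _).mpr (Or.inr ⟨m - k, by omega, by omega, ?_, ?_⟩)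
    · have h1 : (2 * k) + (2 * (m - k)) = 2 * m := by omega
      have : ((2 * k : ℕ) : ZMod (2 * m)) + ((2 * (m - k) : ℕ) : ZMod (2 * m)) = 0 := by
        rw [← Nat.cast_add, h1, cast2m]
      linear_combination -this
    · have h2 : ((m - k : ℕ) : ZMod (2 * m)) + ((k : ℕ) : ZMod (2 * m)) = ((m : ℕ) : ZMod (2 * m)) := by
        rw [← Nat.cast_add]; congr 1; omega
      have h3 : ((m : ℕ) : ZMod (2 * m)) + ((m : ℕ) : ZMod (2 * m)) = 0 := by
        rw [← Nat.cast_add]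
        have he : m + m = 2 * m := by omega
        rw [he, cast2m]
      have h4 : ((2 * k : ℕ) : ZMod (2 * m)) = ((k : ℕ) : ZMod (2 * m)) + ((k : ℕ) : ZMod (2 * m)) := by
        rw [← Nat.cast_add]; congr 1; omega
      linear_combination h4 + h2 + h3

end WT
namespace WT

lemma dvd_window {m D : ℕ} (h : 2 * m ∣ D) (h1 : 0 < D) (h2 : D < 4 * m) : D = 2 * m := by
  obtain ⟨c, rfl⟩ := h
  match c with
  | 0 => omega
  | 1 => omega
  | (c + 2) =>
    have : 2 * m * (c + 2) = 4 * m + 2 * m * c := by ring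
    omega

/-- uniqueness: same ordered pair, same cycle -/
lemma U1 {m : ℕ} (hm : 1 ≤ m) (j j' a b : ZMod (2 * m)) (hj : j.val < m) (hj' : j'.val < m)
    (hc1 : Cplus m j (some a) (some b)) (hc2 : Cplus m j' (some a) (some b)) : j = j' := by
  rw [cplus_fin_iff hm] at hc1 hc2
  rcases hc1 with ⟨k, hk, hb, hjj⟩ | ⟨k, hk1, hk, ha, hjj⟩ <;>
    rcases hc2 with ⟨k', hk', hb', hjj'⟩ | ⟨k', hk1', hk', ha', hjj'⟩
  · have : (2 * k + 1 : ℕ) = (2 * k' + 1 : ℕ) :=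
      castInj hm (by omega) (by omega) (add_left_cancel (hb.symm.trans hb'))
    have hkk : k = k' := by omega
    rw [hjj, hjj', hkk]
  · exfalso
    have h0 : ((2 * k + 1 + 2 * k' : ℕ) : ZMod (2 * m)) = 0 := by
      push_cast
      have h1 : b = a + ((2 * k + 1 : ℕ) : ZMod (2 * m)) := hb
      have h2 : a = b + ((2 * k' : ℕ) : ZMod (2 * m)) := ha'
      push_cast at h1 h2
      linear_combination - h1 - h2
    have h2 : (2 : ℕ) ∣ (2 * k + 1 + 2 * k') := dvd_trans ⟨m, rfl⟩ (castZero h0)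
    omega
  · exfalso
    have h0 : ((2 * k + 2 * k' + 1 : ℕ) : ZMod (2 * m)) = 0 := by
      push_cast
      have h1 : a = b + ((2 * k : ℕ) : ZMod (2 * m)) := ha
      have h2 : b = a + ((2 * k' + 1 : ℕ) : ZMod (2 * m)) := hb'
      push_cast at h1 h2
      linear_combination - h1 - h2
    have h2 : (2 : ℕ) ∣ (2 * k + 2 * k' + 1) := dvd_trans ⟨m, rfl⟩ (castZero h0)
    omega
  · have : (2 * k : ℕ) = (2 * k' : ℕ) :=
      castInj hm (by omega) (by omega) (add_left_cancel (ha.symm.trans ha'))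
    have hkk : k = k' := by omega
    rw [hjj, hjj', hkk]

/-- uniqueness: opposite ordered pairs never in cycles with both indices < m -/
lemma U2 {m : ℕ} (hm : 1 ≤ m) (j j' a b : ZMod (2 * m)) (hj : j.val < m) (hj' : j'.val < m)
    (hc1 : Cplus m j (some a) (some b)) (hc2 : Cplus m j' (some b) (some a)) : False := by
  rw [cplus_fin_iff hm] at hc1 hc2
  rcases hc1 with ⟨k, hk, hb, hjj⟩ | ⟨k, hk1, hk, ha, hjj⟩ <;>
    rcases hc2 with ⟨k', hk', hb', hjj'⟩ | ⟨k', hk1', hk', ha', hjj'⟩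
  · -- odd odd : b = a + (2k+1), a = b + (2k'+1)
    have h0 : ((2 * k + 1 + (2 * k' + 1) : ℕ) : ZMod (2 * m)) = 0 := by
      push_cast
      have h1 : b = a + ((2 * k + 1 : ℕ) : ZMod (2 * m)) := hb
      have h2 : a = b + ((2 * k' + 1 : ℕ) : ZMod (2 * m)) := hb'
      push_cast at h1 h2
      linear_combination - h1 - h2
    have hD := dvd_window (castZero h0) (by omega) (by omega)
    have hj2 : j' = j + ((m : ℕ) : ZMod (2 * m)) := by
      rw [hjj, hjj']
      have h1 : b = a + ((2 * k + 1 : ℕ) : ZMod (2 * m)) := hb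
      push_cast at h1 ⊢
      have h5 : ((k + k' + 1 : ℕ) : ZMod (2 * m)) = ((m : ℕ) : ZMod (2 * m)) := by
        congr 1; omega
      push_cast at h5
      linear_combination h1 + h5
    have := val_addm_lt hm hj
    rw [← hj2] at this
    omega
  · -- odd even : b = a + (2k+1), b = a + 2k'
    have : (2 * k + 1 : ℕ) = (2 * k' : ℕ) :=
      castInj hm (by omega) (by omega) (add_left_cancel (hb.symm.trans ha'))
    omega
  · -- even odd : a = b + 2k, a = b + (2k'+1)
    have : (2 * k : ℕ) = (2 * k' + 1 : ℕ) :=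
      castInj hm (by omega) (by omega) (add_left_cancel (ha.symm.trans hb'))
    omega
  · -- even even : a = b + 2k, b = a + 2k'
    have h0 : ((2 * k + 2 * k' : ℕ) : ZMod (2 * m)) = 0 := by
      push_cast
      have h1 : a = b + ((2 * k : ℕ) : ZMod (2 * m)) := ha
      have h2 : b = a + ((2 * k' : ℕ) : ZMod (2 * m)) := ha'
      push_cast at h1 h2
      linear_combination - h1 - h2
    have hD := dvd_window (castZero h0) (by omega) (by omega)
    have hj2 : j = j' + ((m : ℕ) : ZMod (2 * m)) := by
      rw [hjj, hjj']
      have h1 : a = b + ((2 * k : ℕ) : ZMod (2 * m)) := ha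
      push_cast at h1 ⊢
      have h5 : ((k + k' : ℕ) : ZMod (2 * m)) = ((m : ℕ) : ZMod (2 * m)) := by
        congr 1; omega
      push_cast at h5
      linear_combination h1 + h5
    have := val_addm_lt hm hj'
    rw [← hj2] at this
    omega

lemma finval {m : ℕ} (hm : 1 ≤ m) (j : Fin m) : (((j : ℕ) : ZMod (2 * m))).val = (j : ℕ) :=
  ZMod.val_cast_of_lt (by have := j.isLt; omega)

/-- asymmetry -/
lemma asym {m : ℕ} (hm : 1 ≤ m) (u : Fin m → ZMod 2) (a b : ZMod (2 * m)) :
    warc m u (some a) (some b) → warc m u (some b) (some a) → False := by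
  rintro ⟨j₁, h₁⟩ ⟨j₂, h₂⟩
  have hv₁ : (((j₁ : ℕ) : ZMod (2 * m))).val < m := by rw [finval hm]; exact j₁.isLt
  have hv₂ : (((j₂ : ℕ) : ZMod (2 * m))).val < m := by rw [finval hm]; exact j₂.isLt
  have hinj : (((j₁ : ℕ) : ZMod (2 * m))) = (((j₂ : ℕ) : ZMod (2 * m))) → j₁ = j₂ := by
    intro h
    have := castInj hm (by have := j₁.isLt; omega) (by have := j₂.isLt; omega) h
    exact Fin.ext (by omega)
  rcases h₁ with ⟨hu₁, hC₁⟩ | ⟨hu₁, hC₁⟩ <;> rcases h₂ with ⟨hu₂, hC₂⟩ | ⟨hu₂, hC₂⟩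
  · exact U2 hm _ _ _ _ hv₁ hv₂ hC₁ hC₂
  · have := hinj (U1 hm _ _ _ _ hv₁ hv₂ hC₁ hC₂)
    rw [this, hu₂] at hu₁; exact absurd hu₁ (by decide)
  · have := hinj (U1 hm _ _ _ _ hv₁ hv₂ hC₁ hC₂)
    rw [this, hu₂] at hu₁; exact absurd hu₁ (by decide)
  · exact U2 hm _ _ _ _ hv₂ hv₁ hC₂ hC₁

end WT
namespace WT

lemma warc_of_vv_true {m : ℕ} (hm : 1 ≤ m) (u : Fin m → ZMod 2) (a b : ZMod (2 * m))
    (p : ZMod (2 * m))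
    (hC1 : Cplus m p (some a) (some b))
    (hC2 : Cplus m (p + ((m : ℕ) : ZMod (2 * m))) (some b) (some a))
    (hv : vvB m u p = true) : warc m u (some a) (some b) := by
  by_cases h : p.val < m
  · refine ⟨⟨p.val, h⟩, Or.inl ⟨?_, ?_⟩⟩
    · rw [vvB, dif_pos h, decide_eq_true_eq] at hv; exact hv
    · rwa [mycast hm]
  · have hlt := val_lt hm p
    have hq : (p + ((m : ℕ) : ZMod (2 * m))).val = p.val - m := val_addm_ge hm (by omega)
    refine ⟨⟨p.val - m, by omega⟩, Or.inr ⟨?_, ?_⟩⟩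
    · rw [vvB, dif_neg h, dif_pos (by omega : p.val - m < m), decide_eq_true_eq] at hv; exact hv
    · have : (((p.val - m : ℕ)) : ZMod (2 * m)) = p + ((m : ℕ) : ZMod (2 * m)) := by
        rw [← hq, mycast hm]
      rw [this]; exact hC2

lemma warc_of_vv_false {m : ℕ} (hm : 1 ≤ m) (u : Fin m → ZMod 2) (a b : ZMod (2 * m))
    (p : ZMod (2 * m))
    (hC1 : Cplus m p (some a) (some b))
    (hC2 : Cplus m (p + ((m : ℕ) : ZMod (2 * m))) (some b) (some a))
    (hv : vvB m u p = false) : warc m u (some b) (some a) := by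
  have hz : ∀ x : ZMod 2, ¬x = 1 → x = 0 := by decide
  have hz' : ∀ x : ZMod 2, ¬x = 0 → x = 1 := by decide
  by_cases h : p.val < m
  · refine ⟨⟨p.val, h⟩, Or.inr ⟨?_, ?_⟩⟩
    · rw [vvB, dif_pos h] at hv
      exact hz _ (by simpa using hv)
    · rwa [mycast hm]
  · have hlt := val_lt hm p
    have hq : (p + ((m : ℕ) : ZMod (2 * m))).val = p.val - m := val_addm_ge hm (by omega)
    refine ⟨⟨p.val - m, by omega⟩, Or.inl ⟨?_, ?_⟩⟩
    · rw [vvB, dif_neg h, dif_pos (by omega : p.val - m < m)] at hv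
      exact hz' _ (by simpa using hv)
    · have : (((p.val - m : ℕ)) : ZMod (2 * m)) = p + ((m : ℕ) : ZMod (2 * m)) := by
        rw [← hq, mycast hm]
      rw [this]; exact hC2

lemma warc_odd_iff {m : ℕ} (hm : 1 ≤ m) (u : Fin m → ZMod 2) (a : ZMod (2 * m)) (k : ℕ)
    (hk : k < m) :
    warc m u (some a) (some (a + ((2 * k + 1 : ℕ) : ZMod (2 * m)))) ↔
      vvB m u (a + ((k : ℕ) : ZMod (2 * m))) = true := by
  obtain ⟨hC1, hC2⟩ := Cfacts_odd hm a k hk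
  constructor
  · intro hw
    by_contra hv
    rw [Bool.not_eq_true] at hv
    exact asym hm u _ _ hw (warc_of_vv_false hm u _ _ _ hC1 hC2 hv)
  · intro hv
    exact warc_of_vv_true hm u _ _ _ hC1 hC2 hv

lemma warc_odd_iff' {m : ℕ} (hm : 1 ≤ m) (u : Fin m → ZMod 2) (a : ZMod (2 * m)) (k : ℕ)
    (hk : k < m) :
    warc m u (some (a + ((2 * k + 1 : ℕ) : ZMod (2 * m)))) (some a) ↔
      vvB m u (a + ((k : ℕ) : ZMod (2 * m))) = false := by
  obtain ⟨hC1, hC2⟩ := Cfacts_odd hm a k hk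
  constructor
  · intro hw
    by_contra hv
    rw [Bool.not_eq_false] at hv
    exact asym hm u _ _ (warc_of_vv_true hm u _ _ _ hC1 hC2 hv) hw
  · intro hv
    exact warc_of_vv_false hm u _ _ _ hC1 hC2 hv

lemma warc_even_iff {m : ℕ} (hm : 1 ≤ m) (u : Fin m → ZMod 2) (a : ZMod (2 * m)) (k : ℕ)
    (hk1 : 1 ≤ k) (hk : k < m) :
    warc m u (some a) (some (a - ((2 * k : ℕ) : ZMod (2 * m)))) ↔
      vvB m u (a - ((k : ℕ) : ZMod (2 * m))) = true := by
  obtain ⟨hC1, hC2⟩ := Cfacts_even hm a k hk1 hk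
  constructor
  · intro hw
    by_contra hv
    rw [Bool.not_eq_true] at hv
    exact asym hm u _ _ hw (warc_of_vv_false hm u _ _ _ hC1 hC2 hv)
  · intro hv
    exact warc_of_vv_true hm u _ _ _ hC1 hC2 hv

lemma warc_even_iff' {m : ℕ} (hm : 1 ≤ m) (u : Fin m → ZMod 2) (a : ZMod (2 * m)) (k : ℕ)
    (hk1 : 1 ≤ k) (hk : k < m) :
    warc m u (some (a - ((2 * k : ℕ) : ZMod (2 * m)))) (some a) ↔
      vvB m u (a - ((k : ℕ) : ZMod (2 * m))) = false := by
  obtain ⟨hC1, hC2⟩ := Cfacts_even hm a k hk1 hk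
  constructor
  · intro hw
    by_contra hv
    rw [Bool.not_eq_false] at hv
    exact asym hm u _ _ (warc_of_vv_true hm u _ _ _ hC1 hC2 hv) hw
  · intro hv
    exact warc_of_vv_false hm u _ _ _ hC1 hC2 hv

end WT
namespace WT

/-- odd completer condition -/
def CoddP (m : ℕ) (u : Fin m → ZMod 2) (i : ZMod (2 * m)) (t k : ℕ) : Prop :=
  vvB m u (i + ((k : ℕ) : ZMod (2 * m))) = true ∧
  vvB m u (i + ((k + t : ℕ) : ZMod (2 * m))) = decide (k < t)

/-- even completer condition -/
def CevP (m : ℕ) (u : Fin m → ZMod 2) (i : ZMod (2 * m)) (t k : ℕ) : Prop :=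
  vvB m u (i + ((k : ℕ) : ZMod (2 * m))) = false ∧
  vvB m u (i + ((k + t : ℕ) : ZMod (2 * m))) = decide (t < k)

lemma cast_shift {m : ℕ} (i : ZMod (2 * m)) (p q r : ℕ) (h : p + q = r) :
    i + ((p : ℕ) : ZMod (2 * m)) + ((q : ℕ) : ZMod (2 * m)) = i + ((r : ℕ) : ZMod (2 * m)) := by
  rw [add_assoc, ← Nat.cast_add, h]

lemma cast_shift' {m : ℕ} (i : ZMod (2 * m)) (p q r : ℕ) (h : q + r = p) :
    i + ((p : ℕ) : ZMod (2 * m)) - ((q : ℕ) : ZMod (2 * m)) = i + ((r : ℕ) : ZMod (2 * m)) := by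
  rw [← h, Nat.cast_add]; ring

lemma cast_2m_zero {m : ℕ} (i : ZMod (2 * m)) (p q : ℕ) (h : p = q + 2 * m) :
    i + ((p : ℕ) : ZMod (2 * m)) = i + ((q : ℕ) : ZMod (2 * m)) := by
  rw [h, Nat.cast_add, cast2m]; ring

lemma mem_odd {m : ℕ} (hm : 1 ≤ m) (u : Fin m → ZMod 2) (i : ZMod (2 * m)) (t k : ℕ)
    (ht1 : 1 ≤ t) (ht2 : 2 * t ≤ m) (hk : k < m) :
    (warc m u (some i) (some (i + ((2 * k + 1 : ℕ) : ZMod (2 * m)))) ∧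
     warc m u (some (i + ((2 * k + 1 : ℕ) : ZMod (2 * m))))
       (some (i + ((2 * t : ℕ) : ZMod (2 * m))))) ↔ CoddP m u i t k := by
  rw [CoddP, warc_odd_iff hm u i k hk]
  apply and_congr Iff.rfl
  by_cases hkt : k < t
  · have key : i + ((2 * t : ℕ) : ZMod (2 * m)) =
        (i + ((2 * k + 1 : ℕ) : ZMod (2 * m))) + ((2 * (t - k - 1) + 1 : ℕ) : ZMod (2 * m)) := by
      rw [cast_shift i _ _ (2 * t) (by omega)]
    rw [key, warc_odd_iff hm u _ (t - k - 1) (by omega),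
      cast_shift i _ _ (k + t) (by omega)]
    simp [hkt]
  · have key : i + ((2 * t : ℕ) : ZMod (2 * m)) =
        (i + ((2 * k + 1 : ℕ) : ZMod (2 * m))) + ((2 * (m + t - k - 1) + 1 : ℕ) : ZMod (2 * m)) := by
      rw [cast_shift i _ _ (2 * t + 2 * m) (by omega)]
      exact (cast_2m_zero i _ _ (by omega)).symm
    rw [key, warc_odd_iff hm u _ (m + t - k - 1) (by omega),
      cast_shift i _ _ (k + t + m) (by omega)]
    have hsplit : i + ((k + t + m : ℕ) : ZMod (2 * m)) =
        (i + ((k + t : ℕ) : ZMod (2 * m))) + ((m : ℕ) : ZMod (2 * m)) := by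
      rw [cast_shift i (k + t) m (k + t + m) rfl]
    rw [hsplit, vv_flip hm]
    simp [hkt]

lemma mem_even {m : ℕ} (hm : 1 ≤ m) (u : Fin m → ZMod 2) (i : ZMod (2 * m)) (t k : ℕ)
    (ht1 : 1 ≤ t) (ht2 : 2 * t ≤ m) (hk1 : 1 ≤ k) (hk : k < m) (hkt : k ≠ t) :
    (warc m u (some i) (some (i + ((2 * k : ℕ) : ZMod (2 * m)))) ∧
     warc m u (some (i + ((2 * k : ℕ) : ZMod (2 * m))))
       (some (i + ((2 * t : ℕ) : ZMod (2 * m))))) ↔ CevP m u i t k := by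
  rw [CevP]
  apply and_congr
  · -- first conjunct
    have key : (some i : WVert m) = some ((i + ((2 * k : ℕ) : ZMod (2 * m))) - ((2 * k : ℕ) : ZMod (2 * m))) := by
      rw [add_sub_cancel_right]
    rw [key, warc_even_iff' hm u _ k hk1 hk, cast_shift' i (2 * k) k k (by omega)]
  · by_cases hlt : k < t
    · -- x' = w + 2(t-k) : use warc_even_iff' with a := x'
      have key : i + ((2 * k : ℕ) : ZMod (2 * m)) =
          (i + ((2 * t : ℕ) : ZMod (2 * m))) - ((2 * (t - k) : ℕ) : ZMod (2 * m)) := by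
        rw [cast_shift' i (2 * t) (2 * (t - k)) (2 * k) (by omega)]
      rw [key, warc_even_iff' hm u _ (t - k) (by omega) (by omega),
        cast_shift' i (2 * t) (t - k) (k + t) (by omega)]
      rw [decide_eq_false (by omega : ¬ t < k)]
    · -- k > t : w - 2(k-t) = x'
      have key : i + ((2 * t : ℕ) : ZMod (2 * m)) =
          (i + ((2 * k : ℕ) : ZMod (2 * m))) - ((2 * (k - t) : ℕ) : ZMod (2 * m)) := by
        rw [cast_shift' i (2 * k) (2 * (k - t)) (2 * t) (by omega)]
      rw [key, warc_even_iff hm u _ (k - t) (by omega) (by omega),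
        cast_shift' i (2 * k) (k - t) (k + t) (by omega)]
      rw [decide_eq_true (by omega : t < k)]

lemma ne_odd_i {m : ℕ} (hm : 1 ≤ m) (i : ZMod (2 * m)) (k : ℕ) (hk : k < m) :
    i + ((2 * k + 1 : ℕ) : ZMod (2 * m)) ≠ i := by
  intro h
  have h0 : ((2 * k + 1 : ℕ) : ZMod (2 * m)) = 0 := by linear_combination h
  have := castZero h0
  have h2 : (2 : ℕ) ∣ (2 * k + 1) := dvd_trans ⟨m, rfl⟩ this
  omega

lemma ne_odd_x {m : ℕ} (hm : 1 ≤ m) (i : ZMod (2 * m)) (t k : ℕ) (ht2 : 2 * t ≤ m) (hk : k < m) :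
    i + ((2 * k + 1 : ℕ) : ZMod (2 * m)) ≠ i + ((2 * t : ℕ) : ZMod (2 * m)) := by
  intro h
  have := castInj hm (by omega) (by omega) (add_left_cancel h)
  omega

lemma ne_even_i {m : ℕ} (hm : 1 ≤ m) (i : ZMod (2 * m)) (k : ℕ) (hk1 : 1 ≤ k) (hk : k < m) :
    i + ((2 * k : ℕ) : ZMod (2 * m)) ≠ i := by
  intro h
  have h0 : ((2 * k : ℕ) : ZMod (2 * m)) = ((0 : ℕ) : ZMod (2 * m)) := by
    rw [Nat.cast_zero]
    linear_combination h
  have := castInj hm (by omega) (by omega) h0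
  omega

lemma ne_even_x {m : ℕ} (hm : 1 ≤ m) (i : ZMod (2 * m)) (t k : ℕ) (ht2 : 2 * t ≤ m) (hk : k < m)
    (hkt : k ≠ t) :
    i + ((2 * k : ℕ) : ZMod (2 * m)) ≠ i + ((2 * t : ℕ) : ZMod (2 * m)) := by
  intro h
  have := castInj hm (by omega) (by omega) (add_left_cancel h)
  omega

end WT
namespace WT

section Core

variable {m : ℕ} (u : Fin m → ZMod 2) (i : ZMod (2 * m)) (t : ℕ)

/-- Bool versions of the completer conditions -/
def CoddB (m : ℕ) (u : Fin m → ZMod 2) (i : ZMod (2 * m)) (t k : ℕ) : Bool :=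
  (vvB m u (i + ((k : ℕ) : ZMod (2 * m)))) &&
  (vvB m u (i + ((k + t : ℕ) : ZMod (2 * m))) == decide (k < t))

def CevB (m : ℕ) (u : Fin m → ZMod 2) (i : ZMod (2 * m)) (t k : ℕ) : Bool :=
  (!(vvB m u (i + ((k : ℕ) : ZMod (2 * m))))) &&
  (vvB m u (i + ((k + t : ℕ) : ZMod (2 * m))) == decide (t < k)) &&
  (decide (1 ≤ k)) && (decide (k ≠ t))

lemma CoddB_iff (k : ℕ) : CoddB m u i t k = true ↔ CoddP m u i t k := by
  rw [CoddB, CoddP]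
  cases h1 : vvB m u (i + ((k : ℕ) : ZMod (2 * m))) <;>
    cases h2 : vvB m u (i + ((k + t : ℕ) : ZMod (2 * m))) <;>
    cases h3 : decide (k < t) <;> simp

lemma CevB_iff (k : ℕ) : CevB m u i t k = true ↔ (1 ≤ k ∧ k ≠ t ∧ CevP m u i t k) := by
  rw [CevB, CevP]
  cases h1 : vvB m u (i + ((k : ℕ) : ZMod (2 * m))) <;>
    cases h2 : vvB m u (i + ((k + t : ℕ) : ZMod (2 * m))) <;>
    cases h3 : decide (t < k) <;>
    by_cases h4 : 1 ≤ k <;> by_cases h5 : k = t <;> simp [h4, h5] <;> tauto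

/-- indicator -/
noncomputable def bb (m : ℕ) (u : Fin m → ZMod 2) (i : ZMod (2 * m)) (k : ℕ) : ZMod 2 :=
  if vvB m u (i + ((k : ℕ) : ZMod (2 * m))) = true then 1 else 0

lemma bb_flip (hm : 1 ≤ m) (k : ℕ) : bb m u i (k + m) = 1 + bb m u i k := by
  rw [bb, bb]
  have h : i + ((k + m : ℕ) : ZMod (2 * m)) = (i + ((k : ℕ) : ZMod (2 * m))) + ((m : ℕ) : ZMod (2 * m)) :=
    (cast_shift i k m (k + m) rfl).symm
  rw [h, vv_flip hm]
  cases hx : vvB m u (i + ((k : ℕ) : ZMod (2 * m))) <;> simp <;> decide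

/-- the key per-index identity -/
lemma key_id (hvt : vvB m u (i + ((t : ℕ) : ZMod (2 * m))) = true) (ht1 : 1 ≤ t) (k : ℕ) :
    ((if CoddB m u i t k = true then (1 : ZMod 2) else 0) +
     (if CevB m u i t k = true then (1 : ZMod 2) else 0)) =
      bb m u i k + bb m u i (k + t) + (if k < t then 1 else 0) := by
  rcases Nat.eq_zero_or_pos k with hk0 | hk0
  · subst hk0
    have h2 : vvB m u (i + ((0 + t : ℕ) : ZMod (2 * m))) = true := by
      rw [Nat.zero_add]; exact hvt
    rw [CoddB, CevB, bb, bb, h2]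
    cases h1 : vvB m u (i + ((0 : ℕ) : ZMod (2 * m))) <;>
      simp [Nat.lt_of_lt_of_le Nat.zero_lt_one ht1, decide_eq_true (Nat.lt_of_lt_of_le Nat.zero_lt_one ht1)] <;> decide
  · rcases Nat.lt_trichotomy k t with hkt | hkt | hkt
    · rw [CoddB, CevB, bb, bb, if_pos hkt, decide_eq_true hkt,
        decide_eq_false (by omega : ¬ t < k), decide_eq_true (show 1 ≤ k by omega), decide_eq_true (by omega : k ≠ t)]
      cases h1 : vvB m u (i + ((k : ℕ) : ZMod (2 * m))) <;>
        cases h2 : vvB m u (i + ((k + t : ℕ) : ZMod (2 * m))) <;> simp <;> decide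
    · subst hkt
      rw [CoddB, CevB, bb, bb, if_neg (lt_irrefl k),
        decide_eq_false (lt_irrefl k), decide_eq_false (by omega : ¬ (k ≠ k))]
      have h1 : vvB m u (i + ((k : ℕ) : ZMod (2 * m))) = true := hvt
      rw [h1]
      cases h2 : vvB m u (i + ((k + k : ℕ) : ZMod (2 * m))) <;> simp <;> decide
    · rw [CoddB, CevB, bb, bb, if_neg (by omega : ¬ k < t), decide_eq_false (by omega : ¬ k < t),
        decide_eq_true hkt, decide_eq_true (show 1 ≤ k by omega), decide_eq_true (by omega : k ≠ t)]
      cases h1 : vvB m u (i + ((k : ℕ) : ZMod (2 * m))) <;>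
        cases h2 : vvB m u (i + ((k + t : ℕ) : ZMod (2 * m))) <;> simp <;> decide

/-- shifted sum identity -/
lemma sum_shift (hm : 1 ≤ m) (s : ℕ) : (Finset.range m).sum (fun k => bb m u i (k + s)) =
    (Finset.range m).sum (fun k => bb m u i k) + (s : ZMod 2) := by
  induction s with
  | zero => simp
  | succ s ih =>
    have h1 : (Finset.range m).sum (fun k => bb m u i (k + (s + 1))) =
        (Finset.range m).sum (fun k => bb m u i ((k + 1) + s)) := by
      apply Finset.sum_congr rfl
      intro k _
      congr 1
      omega
    have h2 : (Finset.range m).sum (fun k => bb m u i ((k + 1) + s)) =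
        (Finset.range m).sum (fun k => bb m u i (k + s)) + bb m u i (m + s) - bb m u i (0 + s) := by
      have e1 := Finset.sum_range_succ (fun k => bb m u i (k + s)) m
      have e2 := Finset.sum_range_succ' (fun k => bb m u i (k + s)) m
      rw [e1] at e2
      -- e2 : ∑ range m (fun k => bb (k+s)) + bb (m+s) = ∑ range m (fun k => bb ((k+1)+s)) + bb (0+s)
      linear_combination -e2
    rw [h1, h2, ih]
    have h3 : bb m u i (m + s) = 1 + bb m u i (s + m) - 1 := by rw [Nat.add_comm m s]; ring
    rw [h3, bb_flip u i hm]
    have h4 : bb m u i (0 + s) = bb m u i s := by rw [Nat.zero_add]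
    rw [h4]
    push_cast
    ring

lemma count_even (hm : 1 ≤ m) (hvt : vvB m u (i + ((t : ℕ) : ZMod (2 * m))) = true) (ht1 : 1 ≤ t)
    (ht2 : 2 * t ≤ m) :
    2 ∣ (((Finset.range m).filter (fun k => CoddB m u i t k = true)).card +
         ((Finset.range m).filter (fun k => CevB m u i t k = true)).card) := by
  rw [← ZMod.natCast_eq_zero_iff]
  push_cast
  rw [Finset.card_filter, Finset.card_filter]
  push_cast
  rw [← Finset.sum_add_distrib]
  have := Finset.sum_congr rfl (fun k (_ : k ∈ Finset.range m) => key_id u i t hvt ht1 k)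
  rw [this]
  rw [Finset.sum_add_distrib, Finset.sum_add_distrib, sum_shift u i hm t]
  have hfil : (Finset.range m).sum (fun k => if k < t then (1 : ZMod 2) else 0) = (t : ZMod 2) := by
    rw [Finset.sum_boole]
    have : (Finset.range m).filter (fun k => k < t) = Finset.range t := by
      ext k
      simp only [Finset.mem_filter, Finset.mem_range]
      omega
    rw [this, Finset.card_range]
  rw [hfil]
  have hx : ∀ x : ZMod 2, x * 2 = 0 := by decide
  ring_nf
  rw [hx, hx]
  simp

end Core

end WT
namespace WT

lemma core {m : ℕ} (hm : 1 ≤ m) (u : Fin m → ZMod 2) (i : ZMod (2 * m)) (t : ℕ)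
    (ht1 : 1 ≤ t) (ht2 : 2 * t ≤ m)
    (hvt : vvB m u (i + ((t : ℕ) : ZMod (2 * m))) = true)
    (w₀ : ZMod (2 * m))
    (h2 : w₀ ≠ i + ((2 * t : ℕ) : ZMod (2 * m)))
    (h3 : w₀ ≠ i)
    (h4 : warc m u (some i) (some w₀))
    (h5 : warc m u (some w₀) (some (i + ((2 * t : ℕ) : ZMod (2 * m))))) :
    ∃ w₁ : ZMod (2 * m), w₁ ≠ w₀ ∧ w₁ ≠ i + ((2 * t : ℕ) : ZMod (2 * m)) ∧ w₁ ≠ i ∧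
      warc m u (some i) (some w₁) ∧
      warc m u (some w₁) (some (i + ((2 * t : ℕ) : ZMod (2 * m)))) := by
  classical
  set x' : ZMod (2 * m) := i + ((2 * t : ℕ) : ZMod (2 * m)) with hx'
  -- decompose w₀
  set d : ℕ := (w₀ - i).val with hd
  have hw : w₀ = i + ((d : ℕ) : ZMod (2 * m)) := by
    rw [hd, mycast hm]; ring
  have hdlt : d < 2 * m := val_lt hm _
  have hd0 : d ≠ 0 := by
    intro h
    apply h3
    rw [h] at hw
    simpa using hw
  have hd2t : d ≠ 2 * t := by
    intro h
    apply h2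
    rw [h] at hw
    exact hw
  -- Finsets
  set F := (Finset.range m).filter (fun k => CoddB m u i t k = true) with hF
  set G := (Finset.range m).filter (fun k => CevB m u i t k = true) with hG
  set T := F.image (fun k => i + ((2 * k + 1 : ℕ) : ZMod (2 * m))) ∪
           G.image (fun k => i + ((2 * k : ℕ) : ZMod (2 * m))) with hT
  -- membership transfer, both directions
  have hmemT : ∀ w : ZMod (2 * m), w ∈ T →
      w ≠ x' ∧ w ≠ i ∧ warc m u (some i) (some w) ∧ warc m u (some w) (some x') := by
    intro w hwT
    rw [hT, Finset.mem_union] at hwT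
    rcases hwT with hw1 | hw1 <;> rw [Finset.mem_image] at hw1 <;>
      obtain ⟨k, hkF, rfl⟩ := hw1
    · rw [hF, Finset.mem_filter, Finset.mem_range] at hkF
      obtain ⟨hkm, hkC⟩ := hkF
      have hP := (CoddB_iff u i t k).mp hkC
      have harcs := (mem_odd hm u i t k ht1 ht2 hkm).mpr hP
      exact ⟨ne_odd_x hm i t k ht2 hkm, ne_odd_i hm i k hkm, harcs.1, harcs.2⟩
    · rw [hG, Finset.mem_filter, Finset.mem_range] at hkF
      obtain ⟨hkm, hkC⟩ := hkF
      obtain ⟨hk1, hkt, hP⟩ := (CevB_iff u i t k).mp hkC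
      have harcs := (mem_even hm u i t k ht1 ht2 hk1 hkm hkt).mpr hP
      exact ⟨ne_even_x hm i t k ht2 hkm hkt, ne_even_i hm i k hk1 hkm, harcs.1, harcs.2⟩
  -- w₀ ∈ T
  have hw₀T : w₀ ∈ T := by
    rw [hT, Finset.mem_union]
    rcases Nat.even_or_odd d with hpar | hpar
    · -- even : d = 2k
      obtain ⟨k, hk⟩ := hpar
      have hk1 : 1 ≤ k := by omega
      have hkm : k < m := by omega
      have hkt : k ≠ t := by omega
      have hdk : d = 2 * k := by omega
      have hwk : w₀ = i + ((2 * k : ℕ) : ZMod (2 * m)) := by rw [hw, hdk]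
      right
      rw [Finset.mem_image]
      refine ⟨k, ?_, hwk.symm⟩
      rw [hG, Finset.mem_filter, Finset.mem_range]
      refine ⟨hkm, (CevB_iff u i t k).mpr ⟨hk1, hkt, ?_⟩⟩
      apply (mem_even hm u i t k ht1 ht2 hk1 hkm hkt).mp
      rw [← hwk]
      exact ⟨h4, h5⟩
    · obtain ⟨k, hk⟩ := hpar
      have hkm : k < m := by omega
      have hdk : d = 2 * k + 1 := by omega
      have hwk : w₀ = i + ((2 * k + 1 : ℕ) : ZMod (2 * m)) := by rw [hw, hdk]
      left
      rw [Finset.mem_image]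
      refine ⟨k, ?_, hwk.symm⟩
      rw [hF, Finset.mem_filter, Finset.mem_range]
      refine ⟨hkm, (CoddB_iff u i t k).mpr ?_⟩
      apply (mem_odd hm u i t k ht1 ht2 hkm).mp
      rw [← hwk]
      exact ⟨h4, h5⟩
  -- cardinality
  have hinj1 : Set.InjOn (fun k => i + ((2 * k + 1 : ℕ) : ZMod (2 * m))) ↑F := by
    intro a ha b hb hab
    rw [hF, Finset.coe_filter] at ha hb
    simp only [Set.mem_setOf_eq, Finset.mem_range] at ha hb
    have := castInj hm (by omega) (by omega) (add_left_cancel hab)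
    omega
  have hinj2 : Set.InjOn (fun k => i + ((2 * k : ℕ) : ZMod (2 * m))) ↑G := by
    intro a ha b hb hab
    rw [hG, Finset.coe_filter] at ha hb
    simp only [Set.mem_setOf_eq, Finset.mem_range] at ha hb
    have := castInj hm (by omega) (by omega) (add_left_cancel hab)
    omega
  have hdisj : Disjoint (F.image (fun k => i + ((2 * k + 1 : ℕ) : ZMod (2 * m))))
      (G.image (fun k => i + ((2 * k : ℕ) : ZMod (2 * m)))) := by
    rw [Finset.disjoint_left]
    intro a ha hb
    rw [Finset.mem_image] at ha hb
    obtain ⟨k, hkF, hka⟩ := ha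
    obtain ⟨k', hkG, hkb⟩ := hb
    rw [hF, Finset.mem_filter, Finset.mem_range] at hkF
    rw [hG, Finset.mem_filter, Finset.mem_range] at hkG
    have h := hka.trans hkb.symm
    have := castInj hm (by omega) (by omega) (add_left_cancel h)
    omega
  have hcard : T.card = F.card + G.card := by
    rw [hT, Finset.card_union_of_disjoint hdisj, Finset.card_image_of_injOn hinj1,
      Finset.card_image_of_injOn hinj2]
  have heven : 2 ∣ T.card := by
    rw [hcard]
    exact count_even u i t hm hvt ht1 ht2
  have hlt : 1 < T.card := by
    have h1 : 0 < T.card := Finset.card_pos.mpr ⟨w₀, hw₀T⟩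
    omega
  obtain ⟨w₁, hw₁T, hw₁ne⟩ := Finset.exists_mem_ne hlt w₀
  obtain ⟨ha, hb, hc, hd'⟩ := hmemT w₁ hw₁T
  exact ⟨w₁, hw₁ne, ha, hb, hc, hd'⟩

end WT
namespace WT

def ubar {m : ℕ} (u : Fin m → ZMod 2) : Fin m → ZMod 2 := fun j => 1 - u j

lemma vv_ubar {m : ℕ} (hm : 1 ≤ m) (u : Fin m → ZMod 2) (p : ZMod (2 * m)) :
    vvB m (ubar u) p = ! vvB m u p := by
  have d1 : ∀ x : ZMod 2, decide (1 - x = 1) = ! decide (x = 1) := by decide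
  have d2 : ∀ x : ZMod 2, decide (1 - x = 0) = ! decide (x = 0) := by decide
  have hlt := val_lt hm p
  by_cases h : p.val < m
  · rw [vvB, vvB, dif_pos h, dif_pos h]
    exact d1 _
  · rw [vvB, vvB, dif_neg h, dif_neg h, dif_pos (by omega : p.val - m < m),
      dif_pos (by omega : p.val - m < m)]
    exact d2 _

lemma warc_ubar {m : ℕ} (u : Fin m → ZMod 2) (x y : WVert m) :
    warc m (ubar u) x y ↔ warc m u y x := by
  have e1 : ∀ z : ZMod 2, (1 - z = 1) ↔ z = 0 := by decide
  have e2 : ∀ z : ZMod 2, (1 - z = 0) ↔ z = 1 := by decide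
  constructor
  · rintro ⟨j, ⟨hu, hC⟩ | ⟨hu, hC⟩⟩
    · exact ⟨j, Or.inr ⟨(e1 _).mp hu, hC⟩⟩
    · exact ⟨j, Or.inl ⟨(e2 _).mp hu, hC⟩⟩
  · rintro ⟨j, ⟨hu, hC⟩ | ⟨hu, hC⟩⟩
    · exact ⟨j, Or.inr ⟨(e2 _).mpr hu, hC⟩⟩
    · exact ⟨j, Or.inl ⟨(e1 _).mpr hu, hC⟩⟩

end WT

/-- Let `s` be even with `2 ≤ s ≤ m` and `j = i + s` (so `i` and `j`
have the same parity). If the arc `a` of `W_u` between `i` and `j` has `d(a) = 1`,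
then the third vertex of the unique directed triangle containing `a` is `*`. -/
theorem walecki_stmt15 (m : ℕ) (hm : 1 ≤ m) (u : Fin m → ZMod 2)
    (i : ZMod (2 * m)) (s : ℕ) (hs2 : 2 ≤ s) (hsm : s ≤ m) (hse : Even s)
    (x y : WVert m)
    (hxy : (x = some i ∧ y = some (i + (s : ZMod (2 * m)))) ∨
           (x = some (i + (s : ZMod (2 * m))) ∧ y = some i))
    (ha : warc m u x y)
    (hd : dcount (warc m u) x y = 1) :
    ∀ z : WVert m, z ≠ x → z ≠ y → warc m u y z → warc m u z x → z = none := by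
  classical
  intro z hzx hzy hyz hzx2
  cases z with
  | none => rfl
  | some w =>
  exfalso
  obtain ⟨r, hr⟩ := hse
  set t : ℕ := r with htdef
  have hts : s = 2 * t := by omega
  have ht1 : 1 ≤ t := by omega
  have ht2 : 2 * t ≤ m := by omega
  have hm2 : 2 ≤ m := by omega
  have hcast : ((s : ℕ) : ZMod (2 * m)) = ((2 * t : ℕ) : ZMod (2 * m)) := by rw [hts]
  set x' : ZMod (2 * m) := i + ((2 * t : ℕ) : ZMod (2 * m)) with hx'
  rw [hcast] at hxy
  -- helper identities
  have hxi : x' - ((2 * t : ℕ) : ZMod (2 * m)) = i := by rw [hx']; ring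
  have hxt : x' - ((t : ℕ) : ZMod (2 * m)) = i + ((t : ℕ) : ZMod (2 * m)) :=
    WT.cast_shift' i (2 * t) t t (by omega)
  have hSmem : ∀ w' : ZMod (2 * m), some w' ≠ x → some w' ≠ y →
      warc m u y (some w') → warc m u (some w') x →
      (some w' : WVert m) ∈ {z : WVert m | z ≠ x ∧ z ≠ y ∧ warc m u y z ∧ warc m u z x} :=
    fun w' a b c d => ⟨a, b, c, d⟩
  have hone := Set.ncard_eq_one.mp hd
  obtain ⟨zz, hzz⟩ := hone
  by_cases hv : WT.vvB m u (i + ((t : ℕ) : ZMod (2 * m))) = true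
  · -- arc from x' to i
    have harc : warc m u (some x') (some i) := by
      have := (WT.warc_even_iff hm u x' t ht1 (by omega)).mpr (by rwa [hxt])
      rwa [hxi] at this
    rcases hxy with ⟨hx1, hy1⟩ | ⟨hx1, hy1⟩
    · subst hx1; subst hy1
      exact WT.asym hm u _ _ ha harc
    · subst hx1; subst hy1
      have hw_ne_x : w ≠ x' := fun h => hzx (by rw [h])
      have hw_ne_i : w ≠ i := fun h => hzy (by rw [h])
      obtain ⟨w₁, hw1, hw2, hw3, hw4, hw5⟩ :=
        WT.core hm u i t ht1 ht2 hv w hw_ne_x hw_ne_i hyz hzx2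
      have m1 : (some w : WVert m) ∈ ({zz} : Set (WVert m)) := by
        rw [← hzz]; exact ⟨hzx, hzy, hyz, hzx2⟩
      have m2 : (some w₁ : WVert m) ∈ ({zz} : Set (WVert m)) := by
        rw [← hzz]
        exact ⟨fun h => hw2 (by injection h), fun h => hw3 (by injection h), hw4, hw5⟩
      rw [Set.mem_singleton_iff] at m1 m2
      exact hw1 (by injection (m2.trans m1.symm))
  · -- arc from i to x'
    rw [Bool.not_eq_true] at hv
    have harc : warc m u (some i) (some x') := by
      have := (WT.warc_even_iff' hm u x' t ht1 (by omega)).mpr (by rwa [hxt])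
      rwa [hxi] at this
    rcases hxy with ⟨hx1, hy1⟩ | ⟨hx1, hy1⟩
    · subst hx1; subst hy1
      have hw_ne_i : w ≠ i := fun h => hzx (by rw [h])
      have hw_ne_x : w ≠ x' := fun h => hzy (by rw [h])
      have hvt' : WT.vvB m (WT.ubar u) (i + ((t : ℕ) : ZMod (2 * m))) = true := by
        rw [WT.vv_ubar hm, hv]; rfl
      have h4' : warc m (WT.ubar u) (some i) (some w) := (WT.warc_ubar u _ _).mpr hzx2
      have h5' : warc m (WT.ubar u) (some w) (some x') := (WT.warc_ubar u _ _).mpr hyz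
      obtain ⟨w₁, hw1, hw2, hw3, hw4, hw5⟩ :=
        WT.core hm (WT.ubar u) i t ht1 ht2 hvt' w hw_ne_x hw_ne_i h4' h5'
      have hb4 : warc m u (some w₁) (some i) := (WT.warc_ubar u _ _).mp hw4
      have hb5 : warc m u (some x') (some w₁) := (WT.warc_ubar u _ _).mp hw5
      have m1 : (some w : WVert m) ∈ ({zz} : Set (WVert m)) := by
        rw [← hzz]; exact ⟨hzx, hzy, hyz, hzx2⟩
      have m2 : (some w₁ : WVert m) ∈ ({zz} : Set (WVert m)) := by
        rw [← hzz]
        exact ⟨fun h => hw3 (by injection h), fun h => hw2 (by injection h), hb5, hb4⟩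
      rw [Set.mem_singleton_iff] at m1 m2
      exact hw1 (by injection (m2.trans m1.symm))
    · subst hx1; subst hy1
      exact WT.asym hm u _ _ ha harc
end

section
/- Let k ≥ 3 and m = 2k. The set of signatures u ∈ (ZMod 2)^{2k} such that the Walecki tournament W_u contains an arc a with d(a) = 1 has cardinality at least 2^k. -/
section WaleckiAux

lemma cast_eq_cases {k X Y : ℕ} (hk : 3 ≤ k) (hX : X < 8 * k) (hY : Y < 8 * k)
    (h : (X : ZMod (2 * (2 * k))) = (Y : ZMod (2 * (2 * k)))) :
    X = Y ∨ X = Y + 4 * k ∨ Y = X + 4 * k := by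
  have h' : X ≡ Y [MOD 2 * (2 * k)] := (ZMod.natCast_eq_natCast_iff _ _ _).mp h
  have hd : ((2 * (2 * k) : ℕ) : ℤ) ∣ (Y : ℤ) - (X : ℤ) := (Nat.modEq_iff_dvd.mp h')
  obtain ⟨q, hq⟩ := hd
  have hX' : (X : ℤ) < 8 * k := by exact_mod_cast hX
  have hY' : (Y : ℤ) < 8 * k := by exact_mod_cast hY
  have hk' : (3 : ℤ) ≤ k := by exact_mod_cast hk
  have hc : ((2 * (2 * k) : ℕ) : ℤ) = 4 * (k : ℤ) := by push_cast; try ring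
  rw [hc] at hq
  have h1 : q ≤ 1 := by nlinarith [Int.natCast_nonneg X, Int.natCast_nonneg Y]
  have h2 : -1 ≤ q := by nlinarith [Int.natCast_nonneg X, Int.natCast_nonneg Y]
  interval_cases q <;> omega

lemma warc_char {k : ℕ} (hk : 3 ≤ k) (u : Fin (2 * k) → ZMod 2)
    {a b : ZMod (2 * (2 * k))} {A B : ℕ}
    (hA : (A : ZMod (2 * (2 * k))) = a) (hB : (B : ZMod (2 * (2 * k))) = b)
    (hAn : A < 4 * k) (hBn : B < 4 * k)
    (h : warc (2 * k) u (some a) (some b)) :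
    ∃ j t : ℕ, ∃ hj : j < 2 * k, t ≤ 2 * k - 1 ∧
      ((u ⟨j, hj⟩ = 1 ∧
          (A + t = j ∨ A + t = j + 4 * k ∨ j = A + t + 4 * k) ∧
          (B = j + t + 1 ∨ B = j + t + 1 + 4 * k ∨ j + t + 1 = B + 4 * k)) ∨
       (u ⟨j, hj⟩ = 1 ∧ 1 ≤ t ∧
          (A = j + t ∨ A = j + t + 4 * k ∨ j + t = A + 4 * k) ∧
          (B + t = j ∨ B + t = j + 4 * k ∨ j = B + t + 4 * k)) ∨
       (u ⟨j, hj⟩ = 0 ∧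
          (B + t = j ∨ B + t = j + 4 * k ∨ j = B + t + 4 * k) ∧
          (A = j + t + 1 ∨ A = j + t + 1 + 4 * k ∨ j + t + 1 = A + 4 * k)) ∨
       (u ⟨j, hj⟩ = 0 ∧ 1 ≤ t ∧
          (B = j + t ∨ B = j + t + 4 * k ∨ j + t = B + 4 * k) ∧
          (A + t = j ∨ A + t = j + 4 * k ∨ j = A + t + 4 * k))) := by
  obtain ⟨j, hj⟩ := h
  have hjlt : (j : ℕ) < 2 * k := j.isLt
  have hmk : (⟨(j : ℕ), hjlt⟩ : Fin (2 * k)) = j := rfl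
  rcases hj with ⟨hu, hC⟩ | ⟨hu, hC⟩
  · rcases hC with ⟨h1, h2⟩ | ⟨h1, h2⟩ | ⟨t, ht, h1, h2⟩ | ⟨t, ht1, ht2, h1, h2⟩
    · exact absurd h1 (by simp)
    · exact absurd h2 (by simp)
    · have e1 := Option.some.inj h1
      have e2 := Option.some.inj h2
      have htk : t < 2 * k := by omega
      refine ⟨j, t, hjlt, ht, Or.inl ⟨by rw [hmk]; exact hu, ?_, ?_⟩⟩
      · apply cast_eq_cases hk (by omega) (by omega)
        push_cast
        rw [hA, e1]; try ring
      · apply cast_eq_cases hk (by omega) (by omega)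
        push_cast
        rw [hB, e2]; try ring
    · have e1 := Option.some.inj h1
      have e2 := Option.some.inj h2
      have htk : t < 2 * k := by omega
      refine ⟨j, t, hjlt, ht2, Or.inr (Or.inl ⟨by rw [hmk]; exact hu, ht1, ?_, ?_⟩)⟩
      · apply cast_eq_cases hk (by omega) (by omega)
        push_cast
        rw [hA, e1]; try ring
      · apply cast_eq_cases hk (by omega) (by omega)
        push_cast
        rw [hB, e2]; try ring
  · rcases hC with ⟨h1, h2⟩ | ⟨h1, h2⟩ | ⟨t, ht, h1, h2⟩ | ⟨t, ht1, ht2, h1, h2⟩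
    · exact absurd h1 (by simp)
    · exact absurd h2 (by simp)
    · have e1 := Option.some.inj h1
      have e2 := Option.some.inj h2
      have htk : t < 2 * k := by omega
      refine ⟨j, t, hjlt, ht, Or.inr (Or.inr (Or.inl ⟨by rw [hmk]; exact hu, ?_, ?_⟩))⟩
      · apply cast_eq_cases hk (by omega) (by omega)
        push_cast
        rw [hB, e1]; try ring
      · apply cast_eq_cases hk (by omega) (by omega)
        push_cast
        rw [hA, e2]; try ring
    · have e1 := Option.some.inj h1
      have e2 := Option.some.inj h2
      have htk : t < 2 * k := by omega
      refine ⟨j, t, hjlt, ht2, Or.inr (Or.inr (Or.inr ⟨by rw [hmk]; exact hu, ht1, ?_, ?_⟩))⟩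
      · apply cast_eq_cases hk (by omega) (by omega)
        push_cast
        rw [hB, e1]; try ring
      · apply cast_eq_cases hk (by omega) (by omega)
        push_cast
        rw [hA, e2]; try ring

lemma no_mid_1 {k : ℕ} (hk : 3 ≤ k) (u : Fin (2 * k) → ZMod 2)
    (hper : ∀ i i' : Fin (2 * k), (i : ℕ) = (i' : ℕ) + k → u i = u i')
    (c : ZMod (2 * (2 * k)))
    (hA : warc (2 * k) u (some ((k : ℕ) : ZMod (2 * (2 * k)))) (some c))
    (hB : warc (2 * k) u (some c) (some ((3 * k : ℕ) : ZMod (2 * (2 * k))))) :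
    False := by
  haveI : NeZero (2 * (2 * k)) := ⟨by omega⟩
  have hc : ((c.val : ℕ) : ZMod (2 * (2 * k))) = c := ZMod.natCast_rightInverse c
  have hcv : c.val < 4 * k := by have := ZMod.val_lt c; omega
  obtain ⟨j1, t1, hj1, ht1, H1⟩ :=
    warc_char hk u (A := k) (B := c.val) rfl hc (by omega) hcv hA
  obtain ⟨j2, t2, hj2, ht2, H2⟩ :=
    warc_char hk u (A := c.val) (B := 3 * k) hc rfl hcv (by omega) hB
  rcases H1 with ⟨hu1, e1, e2⟩ | ⟨hu1, e0, e1, e2⟩ | ⟨hu1, e1, e2⟩ | ⟨hu1, e0, e1, e2⟩ <;>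
    rcases H2 with ⟨hu2, f1, f2⟩ | ⟨hu2, f0, f1, f2⟩ | ⟨hu2, f1, f2⟩ | ⟨hu2, f0, f1, f2⟩ <;>
    first
    | omega
    | (rcases (show j1 = j2 + k ∨ j2 = j1 + k by omega) with h | h
       · have h2 := hper ⟨j1, hj1⟩ ⟨j2, hj2⟩ h
         rw [hu1, hu2] at h2
         exact absurd h2 (by decide)
       · have h2 := hper ⟨j2, hj2⟩ ⟨j1, hj1⟩ h
         rw [hu2, hu1] at h2
         exact absurd h2 (by decide))

lemma no_mid_2 {k : ℕ} (hk : 3 ≤ k) (u : Fin (2 * k) → ZMod 2)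
    (hper : ∀ i i' : Fin (2 * k), (i : ℕ) = (i' : ℕ) + k → u i = u i')
    (c : ZMod (2 * (2 * k)))
    (hA : warc (2 * k) u (some ((3 * k : ℕ) : ZMod (2 * (2 * k)))) (some c))
    (hB : warc (2 * k) u (some c) (some ((k : ℕ) : ZMod (2 * (2 * k))))) :
    False := by
  haveI : NeZero (2 * (2 * k)) := ⟨by omega⟩
  have hc : ((c.val : ℕ) : ZMod (2 * (2 * k))) = c := ZMod.natCast_rightInverse c
  have hcv : c.val < 4 * k := by have := ZMod.val_lt c; omega
  obtain ⟨j1, t1, hj1, ht1, H1⟩ :=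
    warc_char hk u (A := 3 * k) (B := c.val) rfl hc (by omega) hcv hA
  obtain ⟨j2, t2, hj2, ht2, H2⟩ :=
    warc_char hk u (A := c.val) (B := k) hc rfl hcv (by omega) hB
  rcases H1 with ⟨hu1, e1, e2⟩ | ⟨hu1, e0, e1, e2⟩ | ⟨hu1, e1, e2⟩ | ⟨hu1, e0, e1, e2⟩ <;>
    rcases H2 with ⟨hu2, f1, f2⟩ | ⟨hu2, f0, f1, f2⟩ | ⟨hu2, f1, f2⟩ | ⟨hu2, f0, f1, f2⟩ <;>
    first
    | omega
    | (rcases (show j1 = j2 + k ∨ j2 = j1 + k by omega) with h | h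
       · have h2 := hper ⟨j1, hj1⟩ ⟨j2, hj2⟩ h
         rw [hu1, hu2] at h2
         exact absurd h2 (by decide)
       · have h2 := hper ⟨j2, hj2⟩ ⟨j1, hj1⟩ h
         rw [hu2, hu1] at h2
         exact absurd h2 (by decide))

variable {k : ℕ}

lemma four_k_zero (hk : 3 ≤ k) : ((4 * k : ℕ) : ZMod (2 * (2 * k))) = 0 := by
  have h := ZMod.natCast_self (2 * (2 * k))
  push_cast at h ⊢
  linear_combination h

lemma cplus_diag (hk : 3 ≤ k) :
    Cplus (2 * k) (((0 : ℕ) : ZMod (2 * (2 * k))))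
      (some ((k : ℕ) : ZMod (2 * (2 * k)))) (some ((3 * k : ℕ) : ZMod (2 * (2 * k)))) := by
  refine Or.inr (Or.inr (Or.inr ⟨k, by omega, by omega, ?_, ?_⟩))
  · congr 1
    push_cast
    ring
  · congr 1
    have h := four_k_zero hk
    push_cast at h ⊢
    linear_combination h

lemma arc_pos_0 (hk : 3 ≤ k) (u : Fin (2 * k) → ZMod 2) (h0 : u ⟨0, by omega⟩ = 0) :
    warc (2 * k) u (some ((3 * k : ℕ) : ZMod (2 * (2 * k))))
      (some ((k : ℕ) : ZMod (2 * (2 * k)))) :=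
  ⟨⟨0, by omega⟩, Or.inr ⟨h0, cplus_diag hk⟩⟩

lemma arc_pos_1 (hk : 3 ≤ k) (u : Fin (2 * k) → ZMod 2) (h0 : u ⟨0, by omega⟩ = 1) :
    warc (2 * k) u (some ((k : ℕ) : ZMod (2 * (2 * k))))
      (some ((3 * k : ℕ) : ZMod (2 * (2 * k)))) :=
  ⟨⟨0, by omega⟩, Or.inl ⟨h0, cplus_diag hk⟩⟩

lemma cplus_star_out (hk : 3 ≤ k) :
    Cplus (2 * k) (((k : ℕ) : ZMod (2 * (2 * k)))) none
      (some ((k : ℕ) : ZMod (2 * (2 * k)))) :=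
  Or.inl ⟨rfl, rfl⟩

lemma cplus_star_in (hk : 3 ≤ k) :
    Cplus (2 * k) (((k : ℕ) : ZMod (2 * (2 * k))))
      (some ((3 * k : ℕ) : ZMod (2 * (2 * k)))) none := by
  refine Or.inr (Or.inl ⟨?_, rfl⟩)
  congr 1
  push_cast
  ring

lemma warc_k_star (hk : 3 ≤ k) (u : Fin (2 * k) → ZMod 2) (hK : u ⟨k, by omega⟩ = 0) :
    warc (2 * k) u (some ((k : ℕ) : ZMod (2 * (2 * k)))) none :=
  ⟨⟨k, by omega⟩, Or.inr ⟨hK, cplus_star_out hk⟩⟩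

lemma warc_star_3k (hk : 3 ≤ k) (u : Fin (2 * k) → ZMod 2) (hK : u ⟨k, by omega⟩ = 0) :
    warc (2 * k) u none (some ((3 * k : ℕ) : ZMod (2 * (2 * k)))) :=
  ⟨⟨k, by omega⟩, Or.inr ⟨hK, cplus_star_in hk⟩⟩

lemma warc_3k_star (hk : 3 ≤ k) (u : Fin (2 * k) → ZMod 2) (hK : u ⟨k, by omega⟩ = 1) :
    warc (2 * k) u (some ((3 * k : ℕ) : ZMod (2 * (2 * k)))) none :=
  ⟨⟨k, by omega⟩, Or.inl ⟨hK, cplus_star_in hk⟩⟩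

lemma warc_star_k (hk : 3 ≤ k) (u : Fin (2 * k) → ZMod 2) (hK : u ⟨k, by omega⟩ = 1) :
    warc (2 * k) u none (some ((k : ℕ) : ZMod (2 * (2 * k)))) :=
  ⟨⟨k, by omega⟩, Or.inl ⟨hK, cplus_star_out hk⟩⟩


lemma dcount_eq_one_0 {k : ℕ} (hk : 3 ≤ k) (u : Fin (2 * k) → ZMod 2)
    (hper : ∀ i i' : Fin (2 * k), (i : ℕ) = (i' : ℕ) + k → u i = u i')
    (h0 : u ⟨0, by omega⟩ = 0) (hK : u ⟨k, by omega⟩ = 0) :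
    dcount (warc (2 * k) u) (some ((3 * k : ℕ) : ZMod (2 * (2 * k))))
      (some ((k : ℕ) : ZMod (2 * (2 * k)))) = 1 := by
  unfold dcount
  have hset : {z : WVert (2 * k) | z ≠ some ((3 * k : ℕ) : ZMod (2 * (2 * k))) ∧
      z ≠ some ((k : ℕ) : ZMod (2 * (2 * k))) ∧
      warc (2 * k) u (some ((k : ℕ) : ZMod (2 * (2 * k)))) z ∧
      warc (2 * k) u z (some ((3 * k : ℕ) : ZMod (2 * (2 * k))))} = {none} := by
    ext z
    simp only [Set.mem_setOf_eq, Set.mem_singleton_iff]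
    constructor
    · rintro ⟨hz1, hz2, hz3, hz4⟩
      cases z with
      | none => rfl
      | some c => exact absurd (no_mid_1 hk u hper c hz3 hz4) (fun h => h)
    · rintro rfl
      exact ⟨by simp, by simp, warc_k_star hk u hK, warc_star_3k hk u hK⟩
  rw [hset, Set.ncard_singleton]

lemma dcount_eq_one_1 {k : ℕ} (hk : 3 ≤ k) (u : Fin (2 * k) → ZMod 2)
    (hper : ∀ i i' : Fin (2 * k), (i : ℕ) = (i' : ℕ) + k → u i = u i')
    (h0 : u ⟨0, by omega⟩ = 1) (hK : u ⟨k, by omega⟩ = 1) :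
    dcount (warc (2 * k) u) (some ((k : ℕ) : ZMod (2 * (2 * k))))
      (some ((3 * k : ℕ) : ZMod (2 * (2 * k)))) = 1 := by
  unfold dcount
  have hset : {z : WVert (2 * k) | z ≠ some ((k : ℕ) : ZMod (2 * (2 * k))) ∧
      z ≠ some ((3 * k : ℕ) : ZMod (2 * (2 * k))) ∧
      warc (2 * k) u (some ((3 * k : ℕ) : ZMod (2 * (2 * k)))) z ∧
      warc (2 * k) u z (some ((k : ℕ) : ZMod (2 * (2 * k))))} = {none} := by
    ext z
    simp only [Set.mem_setOf_eq, Set.mem_singleton_iff]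
    constructor
    · rintro ⟨hz1, hz2, hz3, hz4⟩
      cases z with
      | none => rfl
      | some c => exact absurd (no_mid_2 hk u hper c hz3 hz4) (fun h => h)
    · rintro rfl
      exact ⟨by simp, by simp, warc_3k_star hk u hK, warc_star_k hk u hK⟩
  rw [hset, Set.ncard_singleton]


end WaleckiAux

/-- For `k ≥ 3` and `m = 2k`, there are at least `2^k` signatures
`u ∈ (ZMod 2)^{2k}` for which the Walecki tournament `W_u` contains an arc `a`
with `d(a) = 1`. -/
theorem walecki_stmt19 (k : ℕ) (hk : 3 ≤ k) :
    2 ^ k ≤ {u : Fin (2 * k) → ZMod 2 |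
      ∃ x y : WVert (2 * k), warc (2 * k) u x y ∧
        dcount (warc (2 * k) u) x y = 1}.ncard := by
  set S := {u : Fin (2 * k) → ZMod 2 |
      ∃ x y : WVert (2 * k), warc (2 * k) u x y ∧
        dcount (warc (2 * k) u) x y = 1} with hS
  set f : (Fin k → ZMod 2) → (Fin (2 * k) → ZMod 2) :=
    fun v j => v ⟨(j : ℕ) % k, Nat.mod_lt _ (by omega)⟩ with hfdef
  have hf : Function.Injective f := by
    intro v w h
    funext i
    have h1 := congrFun h ⟨(i : ℕ), by omega⟩
    simp only [hfdef] at h1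
    have e : (⟨((⟨(i : ℕ), by omega⟩ : Fin (2 * k)) : ℕ) % k,
        Nat.mod_lt _ (by omega)⟩ : Fin k) = i := by
      ext
      simpa using Nat.mod_eq_of_lt i.isLt
    rwa [e] at h1
  have hper : ∀ v, ∀ i i' : Fin (2 * k), (i : ℕ) = (i' : ℕ) + k → f v i = f v i' := by
    intro v i i' h
    show v _ = v _
    congr 1
    ext
    show (i : ℕ) % k = (i' : ℕ) % k
    rw [h, Nat.add_mod_right]
  have hmem : ∀ v, f v ∈ S := by
    intro v
    have hv0 : f v ⟨0, by omega⟩ = v ⟨0, by omega⟩ := by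
      show v _ = v _
      congr 1 <;> (ext; simp)
    have hvk : f v ⟨k, by omega⟩ = v ⟨0, by omega⟩ := by
      show v _ = v _
      congr 1 <;> (ext; simp)
    have hd : v ⟨0, by omega⟩ = 0 ∨ v ⟨0, by omega⟩ = 1 := by
      generalize v ⟨0, by omega⟩ = w
      revert w
      decide
    rcases hd with h | h
    · exact ⟨some ((3 * k : ℕ) : ZMod (2 * (2 * k))), some ((k : ℕ) : ZMod (2 * (2 * k))),
        arc_pos_0 hk (f v) (hv0.trans h),
        dcount_eq_one_0 hk (f v) (hper v) (hv0.trans h) (hvk.trans h)⟩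
    · exact ⟨some ((k : ℕ) : ZMod (2 * (2 * k))), some ((3 * k : ℕ) : ZMod (2 * (2 * k))),
        arc_pos_1 hk (f v) (hv0.trans h),
        dcount_eq_one_1 hk (f v) (hper v) (hv0.trans h) (hvk.trans h)⟩
  have hsub : Set.range f ⊆ S := by
    rintro _ ⟨v, rfl⟩
    exact hmem v
  have h1 : (Set.range f).ncard = 2 ^ k := by
    rw [← Set.image_univ, Set.ncard_image_of_injective _ hf, Set.ncard_univ]
    simp [Nat.card_eq_fintype_card]
  calc 2 ^ k = (Set.range f).ncard := h1.symm
    _ ≤ S.ncard := Set.ncard_le_ncard hsub (Set.toFinite S)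
end
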